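/- arXiv:1511.01770 — 14 statements merged into one kernel-verified Lean document; each statement's English description precedes it below -/
import Mathlib

section
/- Let π be a permutation of {1,...,n} avoiding both 213 and 231, and let 1 ≤ i < n. Then π(i) < π(i+1) (i.e., i is an ascent) if and only if π(i) = min{π(i), ..., π(n)}; and π(i) > π(i+1) (i.e., i is a descent) if and only if π(i) = max{π(i), ..., π(n)}. -/
def Contains213 {n : ℕ} (π : Equiv.Perm (Fin n)) : Prop :=
  ∃ i j k : Fin n, i < j ∧ j < k ∧ π j < π i ∧ π i < π k

def Contains231 {n : ℕ} (π : Equiv.Perm (Fin n)) : Prop :=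
  ∃ i j k : Fin n, i < j ∧ j < k ∧ π k < π i ∧ π i < π j

def Av213231 {n : ℕ} (π : Equiv.Perm (Fin n)) : Prop :=
  ¬ Contains213 π ∧ ¬ Contains231 π

/-- In a (213,231)-avoiding permutation, `i` is an ascent iff `π i` is the
suffix minimum, and `i` is a descent iff `π i` is the suffix maximum. -/
theorem ascent_iff_suffix_min_descent_iff_suffix_max (n : ℕ)
    (π : Equiv.Perm (Fin n)) (h : Av213231 π) (i : Fin n) (hi : i.val + 1 < n) :
    (π i < π ⟨i.val + 1, hi⟩ ↔ ∀ j : Fin n, i ≤ j → π i ≤ π j) ∧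
    (π ⟨i.val + 1, hi⟩ < π i ↔ ∀ j : Fin n, i ≤ j → π j ≤ π i) := by
  obtain ⟨h213, h231⟩ := h
  set s : Fin n := ⟨i.val + 1, hi⟩ with hs
  have his : i < s := by simp [hs, Fin.lt_def]
  have key : (∀ j, i < j → π i < π j) ∨ (∀ j, i < j → π j < π i) := by
    by_contra hc
    push_neg at hc
    obtain ⟨⟨j, hij, hj⟩, ⟨k, hik, hk⟩⟩ := hc
    have hj' : π j < π i :=
      lt_of_le_of_ne hj (fun e => (ne_of_gt hij) (π.injective e))
    have hk' : π i < π k :=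
      lt_of_le_of_ne hk (fun e => (ne_of_gt hik) (π.injective e).symm)
    rcases lt_trichotomy j k with hjk | hjk | hjk
    · exact h213 ⟨i, j, k, hij, hjk, hj', hk'⟩
    · exact absurd (hjk ▸ hj') (asymm hk')
    · exact h231 ⟨i, k, j, hik, hjk, hj', hk'⟩
  have hne : π i ≠ π s := fun e => (ne_of_lt his) (π.injective e)
  constructor
  · constructor
    · intro hlt j hij
      rcases key with k1 | k2
      · rcases eq_or_lt_of_le hij with e | l
        · rw [e]
        · exact le_of_lt (k1 j l)
      · exact absurd hlt (asymm (k2 s his))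
    · intro hall
      exact lt_of_le_of_ne (hall s (le_of_lt his)) hne
  · constructor
    · intro hlt j hij
      rcases key with k1 | k2
      · exact absurd hlt (asymm (k1 s his))
      · rcases eq_or_lt_of_le hij with e | l
        · rw [e]
        · exact le_of_lt (k2 j l)
    · intro hall
      exact lt_of_le_of_ne (hall s (le_of_lt his)) (Ne.symm hne)
end

section
/- For n ≥ 1, the number of permutations of {1,...,n} avoiding both patterns 213 and 231 equals 2^(n-1). -/
open Equiv

def extLow {n : ℕ} (σ : Perm (Fin n)) : Perm (Fin (n+1)) where
  toFun := Fin.cases 0 (fun i => (σ i).succ)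
  invFun := Fin.cases 0 (fun i => (σ.symm i).succ)
  left_inv := by
    intro x
    induction x using Fin.cases with
    | zero => simp
    | succ i => simp
  right_inv := by
    intro x
    induction x using Fin.cases with
    | zero => simp
    | succ i => simp

def extHigh {n : ℕ} (σ : Perm (Fin n)) : Perm (Fin (n+1)) where
  toFun := Fin.cases (Fin.last n) (fun i => (σ i).castSucc)
  invFun := Fin.lastCases 0 (fun i => (σ.symm i).succ)
  left_inv := by
    intro x
    induction x using Fin.cases with
    | zero => simp
    | succ i => simp
  right_inv := by
    intro x
    induction x using Fin.lastCases with
    | last => simp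
    | cast i => simp

@[simp] lemma extLow_zero {n : ℕ} (σ : Perm (Fin n)) : extLow σ 0 = 0 := rfl
@[simp] lemma extLow_succ {n : ℕ} (σ : Perm (Fin n)) (i : Fin n) :
    extLow σ i.succ = (σ i).succ := rfl
@[simp] lemma extHigh_zero {n : ℕ} (σ : Perm (Fin n)) : extHigh σ 0 = Fin.last n := rfl
@[simp] lemma extHigh_succ {n : ℕ} (σ : Perm (Fin n)) (i : Fin n) :
    extHigh σ i.succ = (σ i).castSucc := rfl

lemma av_extLow {n : ℕ} {σ : Perm (Fin n)} (h : Av213231 σ) : Av213231 (extLow σ) := by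
  constructor
  · rintro ⟨i, j, k, hij, hjk, h1, h2⟩
    have hi : i ≠ 0 := by rintro rfl; simp at h1
    have hj : j ≠ 0 := by rintro rfl; simp at hij
    have hk : k ≠ 0 := by rintro rfl; simp at hjk
    obtain ⟨a, rfl⟩ := Fin.exists_succ_eq.mpr hi
    obtain ⟨b, rfl⟩ := Fin.exists_succ_eq.mpr hj
    obtain ⟨c, rfl⟩ := Fin.exists_succ_eq.mpr hk
    simp only [extLow_succ, Fin.succ_lt_succ_iff] at h1 h2 hij hjk
    exact h.1 ⟨a, b, c, hij, hjk, h1, h2⟩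
  · rintro ⟨i, j, k, hij, hjk, h1, h2⟩
    have hi : i ≠ 0 := by rintro rfl; simp at h1
    have hj : j ≠ 0 := by rintro rfl; simp at hij
    have hk : k ≠ 0 := by rintro rfl; simp at hjk
    obtain ⟨a, rfl⟩ := Fin.exists_succ_eq.mpr hi
    obtain ⟨b, rfl⟩ := Fin.exists_succ_eq.mpr hj
    obtain ⟨c, rfl⟩ := Fin.exists_succ_eq.mpr hk
    simp only [extLow_succ, Fin.succ_lt_succ_iff] at h1 h2 hij hjk
    exact h.2 ⟨a, b, c, hij, hjk, h1, h2⟩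

lemma av_extHigh {n : ℕ} {σ : Perm (Fin n)} (h : Av213231 σ) : Av213231 (extHigh σ) := by
  constructor
  · rintro ⟨i, j, k, hij, hjk, h1, h2⟩
    have hi : i ≠ 0 := by
      rintro rfl
      simp only [extHigh_zero] at h2
      exact absurd h2 (not_lt.mpr (Fin.le_last _))
    have hj : j ≠ 0 := by rintro rfl; simp at hij
    have hk : k ≠ 0 := by rintro rfl; simp at hjk
    obtain ⟨a, rfl⟩ := Fin.exists_succ_eq.mpr hi
    obtain ⟨b, rfl⟩ := Fin.exists_succ_eq.mpr hj
    obtain ⟨c, rfl⟩ := Fin.exists_succ_eq.mpr hk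
    simp only [extHigh_succ, Fin.castSucc_lt_castSucc_iff, Fin.succ_lt_succ_iff] at h1 h2 hij hjk
    exact h.1 ⟨a, b, c, hij, hjk, h1, h2⟩
  · rintro ⟨i, j, k, hij, hjk, h1, h2⟩
    have hi : i ≠ 0 := by
      rintro rfl
      simp only [extHigh_zero] at h2
      exact absurd h2 (not_lt.mpr (Fin.le_last _))
    have hj : j ≠ 0 := by rintro rfl; simp at hij
    have hk : k ≠ 0 := by rintro rfl; simp at hjk
    obtain ⟨a, rfl⟩ := Fin.exists_succ_eq.mpr hi
    obtain ⟨b, rfl⟩ := Fin.exists_succ_eq.mpr hj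
    obtain ⟨c, rfl⟩ := Fin.exists_succ_eq.mpr hk
    simp only [extHigh_succ, Fin.castSucc_lt_castSucc_iff, Fin.succ_lt_succ_iff] at h1 h2 hij hjk
    exact h.2 ⟨a, b, c, hij, hjk, h1, h2⟩

lemma zero_or_last {n : ℕ} {π : Perm (Fin (n+1))} (h : Av213231 π) :
    π 0 = 0 ∨ π 0 = Fin.last n := by
  by_contra hc
  push_neg at hc
  obtain ⟨h0, hl⟩ := hc
  obtain ⟨j, hπj⟩ : ∃ j, π j = 0 := ⟨π.symm 0, π.apply_symm_apply 0⟩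
  obtain ⟨k, hπk⟩ : ∃ k, π k = Fin.last n := ⟨π.symm (Fin.last n), π.apply_symm_apply _⟩
  have hj0 : j ≠ 0 := by rintro rfl; exact h0 hπj
  have hk0 : k ≠ 0 := by rintro rfl; exact hl hπk
  have h1 : π j < π 0 := by
    rw [hπj]; exact lt_of_le_of_ne (Fin.zero_le _) (Ne.symm h0)
  have h2 : π 0 < π k := by
    rw [hπk]; exact lt_of_le_of_ne (Fin.le_last _) hl
  rcases lt_trichotomy j k with hjk | hjk | hjk
  · exact h.1 ⟨0, j, k, Fin.pos_iff_ne_zero.mpr hj0, hjk, h1, h2⟩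
  · subst hjk
    rw [hπj] at hπk
    have := Fin.le_last (π 0)
    rw [← hπk] at this
    exact h0 (Fin.le_zero_iff.mp this)
  · exact h.2 ⟨0, k, j, Fin.pos_iff_ne_zero.mpr hk0, hjk, h1, h2⟩

lemma exists_extLow {n : ℕ} {π : Perm (Fin (n+1))} (hπ : Av213231 π) (h0 : π 0 = 0) :
    ∃ σ : Perm (Fin n), Av213231 σ ∧ extLow σ = π := by
  have hne : ∀ i : Fin n, π i.succ ≠ 0 := by
    intro i hi
    exact (Fin.succ_ne_zero i) (π.injective (by rw [hi, h0]))
  let f : Fin n → Fin n := fun i => (π i.succ).pred (hne i)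
  have hf : Function.Injective f := by
    intro a b hab
    have : π a.succ = π b.succ := by
      have := congrArg Fin.succ hab
      simpa [f, Fin.succ_pred] using this
    exact Fin.succ_injective _ (π.injective this)
  let σ : Perm (Fin n) := Equiv.ofBijective f ((Finite.injective_iff_bijective).mp hf)
  have hσ : ∀ i, (σ i).succ = π i.succ := by
    intro i
    show ((π i.succ).pred (hne i)).succ = π i.succ
    simp
  have hlt : ∀ a b : Fin n, σ a < σ b ↔ π a.succ < π b.succ := by
    intro a b
    rw [← Fin.succ_lt_succ_iff, hσ, hσ]
  refine ⟨σ, ⟨?_, ?_⟩, ?_⟩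
  · rintro ⟨a, b, c, hab, hbc, h1, h2⟩
    exact hπ.1 ⟨a.succ, b.succ, c.succ, Fin.succ_lt_succ_iff.mpr hab,
      Fin.succ_lt_succ_iff.mpr hbc, (hlt _ _).mp h1, (hlt _ _).mp h2⟩
  · rintro ⟨a, b, c, hab, hbc, h1, h2⟩
    exact hπ.2 ⟨a.succ, b.succ, c.succ, Fin.succ_lt_succ_iff.mpr hab,
      Fin.succ_lt_succ_iff.mpr hbc, (hlt _ _).mp h1, (hlt _ _).mp h2⟩
  · ext x
    induction x using Fin.cases with
    | zero => simp only [extLow_zero]; exact congrArg Fin.val h0.symm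
    | succ i => simp only [extLow_succ]; exact congrArg Fin.val (hσ i)

lemma exists_extHigh {n : ℕ} {π : Perm (Fin (n+1))} (hπ : Av213231 π) (h0 : π 0 = Fin.last n) :
    ∃ σ : Perm (Fin n), Av213231 σ ∧ extHigh σ = π := by
  have hne : ∀ i : Fin n, π i.succ ≠ Fin.last n := by
    intro i hi
    exact (Fin.succ_ne_zero i) (π.injective (by rw [hi, h0]))
  have hlt' : ∀ i : Fin n, π i.succ < Fin.last n := fun i =>
    lt_of_le_of_ne (Fin.le_last _) (hne i)
  let f : Fin n → Fin n := fun i => (π i.succ).castPred (hne i)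
  have hf : Function.Injective f := by
    intro a b hab
    have : π a.succ = π b.succ := by
      have := congrArg Fin.castSucc hab
      simpa [f, Fin.castSucc_castPred] using this
    exact Fin.succ_injective _ (π.injective this)
  let σ : Perm (Fin n) := Equiv.ofBijective f ((Finite.injective_iff_bijective).mp hf)
  have hσ : ∀ i, (σ i).castSucc = π i.succ := by
    intro i
    show ((π i.succ).castPred (hne i)).castSucc = π i.succ
    simp
  have hlt : ∀ a b : Fin n, σ a < σ b ↔ π a.succ < π b.succ := by
    intro a b
    rw [← Fin.castSucc_lt_castSucc_iff, hσ, hσ]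
  refine ⟨σ, ⟨?_, ?_⟩, ?_⟩
  · rintro ⟨a, b, c, hab, hbc, h1, h2⟩
    exact hπ.1 ⟨a.succ, b.succ, c.succ, Fin.succ_lt_succ_iff.mpr hab,
      Fin.succ_lt_succ_iff.mpr hbc, (hlt _ _).mp h1, (hlt _ _).mp h2⟩
  · rintro ⟨a, b, c, hab, hbc, h1, h2⟩
    exact hπ.2 ⟨a.succ, b.succ, c.succ, Fin.succ_lt_succ_iff.mpr hab,
      Fin.succ_lt_succ_iff.mpr hbc, (hlt _ _).mp h1, (hlt _ _).mp h2⟩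
  · ext x
    induction x using Fin.cases with
    | zero => simp only [extHigh_zero]; exact congrArg Fin.val h0.symm
    | succ i => simp only [extHigh_succ]; exact congrArg Fin.val (hσ i)

lemma step_card (n : ℕ) :
    Nat.card {π : Perm (Fin (n+2)) // Av213231 π}
      = 2 * Nat.card {π : Perm (Fin (n+1)) // Av213231 π} := by
  let Ψ : Bool × {σ : Perm (Fin (n+1)) // Av213231 σ} → {π : Perm (Fin (n+2)) // Av213231 π} :=
    fun p => if p.1 then ⟨extHigh p.2.1, av_extHigh p.2.2⟩ else ⟨extLow p.2.1, av_extLow p.2.2⟩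
  have hbij : Function.Bijective Ψ := by
    constructor
    · rintro ⟨b1, σ1, hσ1⟩ ⟨b2, σ2, hσ2⟩ h
      rcases b1 <;> rcases b2 <;>
        simp only [Ψ, if_true, if_false, Bool.false_eq_true, Subtype.mk.injEq,
          Prod.mk.injEq] at h ⊢
      · refine ⟨trivial, ?_⟩
        ext i
        have := congrArg (fun q : Perm (Fin (n+2)) => q i.succ) h
        simp only [extLow_succ] at this
        exact congrArg Fin.val (Fin.succ_injective _ this)
      · exfalso
        have h00 := congrArg (fun q : Perm (Fin (n+2)) => q 0) h
        simp only [extLow_zero, extHigh_zero] at h00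
        have : (0 : ℕ) = n + 1 := by simpa using congrArg Fin.val h00
        omega
      · exfalso
        have h00 := congrArg (fun q : Perm (Fin (n+2)) => q 0) h
        simp only [extLow_zero, extHigh_zero] at h00
        have : (n + 1 : ℕ) = 0 := by simpa using congrArg Fin.val h00
        omega
      · refine ⟨trivial, ?_⟩
        ext i
        have := congrArg (fun q : Perm (Fin (n+2)) => q i.succ) h
        simp only [extHigh_succ] at this
        exact congrArg Fin.val (Fin.castSucc_injective _ this)
    · rintro ⟨π, hπ⟩
      rcases zero_or_last hπ with h0 | h0
      · obtain ⟨σ, hσ, hext⟩ := exists_extLow hπ h0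
        exact ⟨(false, ⟨σ, hσ⟩), by simp [Ψ, hext]⟩
      · obtain ⟨σ, hσ, hext⟩ := exists_extHigh hπ h0
        exact ⟨(true, ⟨σ, hσ⟩), by simp [Ψ, hext]⟩
  rw [← Nat.card_eq_of_bijective Ψ hbij, Nat.card_prod]
  simp

/-- For `n ≥ 1` there are exactly `2^(n-1)` permutations of `{1,…,n}`
avoiding both 213 and 231. -/
theorem card_av213231 (n : ℕ) (hn : 1 ≤ n) :
    Nat.card {π : Equiv.Perm (Fin n) // Av213231 π} = 2 ^ (n - 1) := by
  induction n, hn using Nat.le_induction with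
  | base =>
    have h1 : ∀ π : Perm (Fin 1), Av213231 π := by
      intro π
      constructor <;> rintro ⟨i, j, k, hij, hjk, -⟩ <;>
        exact absurd (hij.trans hjk) (by omega)
    haveI : Unique {π : Perm (Fin 1) // Av213231 π} :=
      { default := ⟨1, h1 1⟩
        uniq := fun a => Subtype.ext (Subsingleton.elim _ _) }
    simp [Nat.card_unique]
  | succ m hm ih =>
    obtain ⟨k, rfl⟩ : ∃ k, m = k + 1 := ⟨m - 1, by omega⟩
    rw [step_card k, ih]
    simp
    ring
end

section
/- The map Φ sending a (213,231)-avoiding permutation π of {1,...,n} (n ≥ 1) to the binary word w of length n-1 where w(i) = 1 if π(i) < π(i+1) and w(i) = 0 if π(i) > π(i+1), is a bijection between the set of permutations of {1,...,n} avoiding both 213 and 231 and the set of binary words of length n-1. -/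
open Equiv Nat

theorem Equiv.Perm.eq_of_lt_iff_lt {α : Type*} [LinearOrder α] [Finite α] {π σ : Perm α}
    (h : ∀ x y, x < y → (π x < π y ↔ σ x < σ y)) : π = σ := by
  have key : ∀ x y, π x < π y ↔ σ x < σ y := by
    intro x y
    rcases lt_trichotomy x y with hxy | rfl | hyx
    · exact h x y hxy
    · simp
    · rw [← not_iff_not, not_lt, not_lt, le_iff_lt_or_eq, le_iff_lt_or_eq, h y x hyx,
        π.injective.eq_iff, σ.injective.eq_iff]
  have hmono : StrictMono (σ * π⁻¹) := fun a b hab => by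
    simpa using (key (π⁻¹ a) (π⁻¹ b)).1 (by simpa using hab)
  ext x
  simpa using (hmono.apply_eq (x := π x)).symm

theorem av213231_iff {m : ℕ} (π : Perm (Fin m)) :
    Av213231 π ↔ ∀ i j k, i < j → i < k → (π i < π j ↔ π i < π k) := by
  constructor
  · rintro ⟨h213, h231⟩
    have side : ∀ i j k, i < j → i < k → π i < π j → π i < π k := by
      intro i j k hij hik hj
      by_contra! hk
      have hk : π k < π i := hk.lt_of_ne (π.injective.ne hik.ne')
      rcases lt_trichotomy j k with hjk | rfl | hkj
      · exact h231 ⟨i, j, k, hij, hjk, hk, hj⟩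
      · exact hk.not_gt hj
      · exact h213 ⟨i, k, j, hik, hkj, hk, hj⟩
    exact fun i j k hij hik => ⟨side i j k hij hik, side i k j hik hij⟩
  · intro h
    refine ⟨fun ⟨i, j, k, hij, hjk, hji, hik⟩ => ?_, fun ⟨i, j, k, hij, hjk, hki, hij'⟩ => ?_⟩
    · exact hji.not_gt ((h i j k hij (hij.trans hjk)).2 hik)
    · exact hki.not_gt ((h i j k hij (hij.trans hjk)).1 hij')

theorem Av213231.lt_iff_lt {m : ℕ} {π : Perm (Fin m)} (hπ : Av213231 π) {i j k : Fin m}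
    (hij : i < j) (hik : i < k) : π i < π j ↔ π i < π k :=
  (av213231_iff π).1 hπ i j k hij hik

theorem Av213231.eq_of_ascent_iff {n : ℕ} {π σ : Perm (Fin (n + 1))} (hπ : Av213231 π)
    (hσ : Av213231 σ) (h : ∀ i : Fin n, π i.castSucc < π i.succ ↔ σ i.castSucc < σ i.succ) :
    π = σ := by
  refine Perm.eq_of_lt_iff_lt fun x y hxy => ?_
  obtain ⟨i, rfl⟩ := Fin.exists_castSucc_eq.2 (hxy.trans_le (Fin.le_last y)).ne
  rw [hπ.lt_iff_lt hxy Fin.castSucc_lt_succ, hσ.lt_iff_lt hxy Fin.castSucc_lt_succ, h i]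

theorem Nat.count_add_count_not (p : ℕ → Prop) [DecidablePred p] (n : ℕ) :
    count p n + count (fun k => ¬ p k) n = n := by
  induction n with
  | zero => simp
  | succ n ih => simp only [count_succ]; split_ifs <;> omega

section MinMax

variable (n : ℕ) (p : ℕ → Prop) [DecidablePred p]

/-- Entry `i` of a permutation of `{0, …, n}` that takes the smallest unused value where `p`
holds and the largest one elsewhere: these are the number of earlier positions in `p`, and `n`
minus the number of earlier positions outside `p`. -/
def minMaxVal (i : ℕ) : ℕ :=
  if p i then count p i else n - count (fun k => ¬ p k) i

variable {n p}

theorem minMaxVal_mem_Icc {i : ℕ} (hi : i ≤ n) :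
    minMaxVal n p i ∈ Set.Icc (count p i) (n - count (fun k => ¬ p k) i) := by
  have := count_add_count_not p i
  unfold minMaxVal
  constructor <;> split_ifs <;> omega

theorem minMaxVal_lt_of_pos {i j : ℕ} (hij : i < j) (hj : j ≤ n) (hi : p i) :
    minMaxVal n p i < minMaxVal n p j := by
  have hcount := count_strict_mono hi hij
  have hj := (minMaxVal_mem_Icc (p := p) hj).1
  have hval : minMaxVal n p i = count p i := if_pos hi
  omega

theorem minMaxVal_lt_of_neg {i j : ℕ} (hij : i < j) (hj : j ≤ n) (hi : ¬ p i) :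
    minMaxVal n p j < minMaxVal n p i := by
  have hcount := count_strict_mono (p := fun k => ¬ p k) hi hij
  have hle := count_le (p := fun k => ¬ p k) (n := j)
  have hj := (minMaxVal_mem_Icc (p := p) hj).2
  have hval : minMaxVal n p i = n - count (fun k => ¬ p k) i := if_neg hi
  omega

theorem minMaxVal_lt_iff {i j : ℕ} (hij : i < j) (hj : j ≤ n) :
    minMaxVal n p i < minMaxVal n p j ↔ p i := by
  by_cases hi : p i
  · simp only [hi, minMaxVal_lt_of_pos hij hj hi]
  · simp only [hi, iff_false, not_lt, (minMaxVal_lt_of_neg hij hj hi).le]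

theorem minMaxVal_injOn : Set.InjOn (minMaxVal n p) (Set.Iic n) := by
  have hne : ∀ {i j}, i < j → j ≤ n → minMaxVal n p i ≠ minMaxVal n p j := by
    intro i j hij hj
    by_cases hi : p i
    · exact (minMaxVal_lt_of_pos hij hj hi).ne
    · exact (minMaxVal_lt_of_neg hij hj hi).ne'
  intro i hi j hj hval
  rcases lt_trichotomy i j with hij | rfl | hji
  · exact absurd hval (hne hij hj)
  · rfl
  · exact absurd hval.symm (hne hji hi)

variable (n p)

noncomputable def minMaxPerm : Perm (Fin (n + 1)) :=
  Equiv.ofBijective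
    (fun i => ⟨minMaxVal n p i,
      lt_succ_of_le ((minMaxVal_mem_Icc (Fin.is_le i)).2.trans (sub_le _ _))⟩)
    (Finite.injective_iff_bijective.1 fun i j hij =>
      Fin.ext (minMaxVal_injOn (Fin.is_le i) (Fin.is_le j) (congrArg Fin.val hij)))

variable {n p}

theorem minMaxPerm_lt_iff {i j : Fin (n + 1)} (hij : i < j) :
    minMaxPerm n p i < minMaxPerm n p j ↔ p i :=
  minMaxVal_lt_iff hij (Fin.is_le j)

theorem av213231_minMaxPerm : Av213231 (minMaxPerm n p) :=
  (av213231_iff _).2 fun _ _ _ hij hik => by rw [minMaxPerm_lt_iff hij, minMaxPerm_lt_iff hik]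

end MinMax

/-- The map sending a (213,231)-avoiding permutation of `{1,…,n+1}` to its
ascent/descent word (`true` at `i` iff `π i < π (i+1)`) is a bijection onto
the binary words of length `n`. -/
theorem ascent_word_bijective (n : ℕ) :
    Function.Bijective (fun π : {π : Equiv.Perm (Fin (n + 1)) // Av213231 π} =>
      fun i : Fin n => decide (π.1 i.castSucc < π.1 i.succ)) := by
  constructor
  · rintro ⟨π, hπ⟩ ⟨σ, hσ⟩ h
    exact Subtype.ext (hπ.eq_of_ascent_iff hσ fun i => decide_eq_decide.1 (congrFun h i))
  · intro w
    let p : ℕ → Prop := fun k => ∃ hk : k < n, w ⟨k, hk⟩ = true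
    refine ⟨⟨minMaxPerm n p, av213231_minMaxPerm⟩, funext fun i => ?_⟩
    simp [minMaxPerm_lt_iff Fin.castSucc_lt_succ, p, i.isLt]
end

section
/- Let π and σ be permutations of {1,...,n} and {1,...,k} respectively (k ≤ n), both avoiding 213 and 231. Then π contains σ as a pattern if and only if the ascent/descent word Φ(σ) of σ occurs as a (not necessarily contiguous) subsequence of the ascent/descent word Φ(π) of π, where Φ(τ) for a permutation τ of length m is the binary word of length m-1 with i-th letter 1 if τ(i) < τ(i+1) and 0 otherwise. -/
/-- `π` contains `σ` as a pattern. -/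
def ContainsPat {k n : ℕ} (σ : Equiv.Perm (Fin k)) (π : Equiv.Perm (Fin n)) : Prop :=
  ∃ f : Fin k → Fin n, StrictMono f ∧ ∀ a b : Fin k, σ a < σ b ↔ π (f a) < π (f b)

/-- The ascent/descent word of a permutation of `{1,…,m+1}`. -/
def ascWord {m : ℕ} (τ : Equiv.Perm (Fin (m + 1))) : List Bool :=
  List.ofFn (fun i : Fin m => decide (τ i.castSucc < τ i.succ))

open Function

theorem lt_iff_lt_of_forall_lt_imp {ι α β : Type*} [LinearOrder ι] [LinearOrder α]
    [LinearOrder β] {u : ι → α} {v : ι → β} (hu : Injective u) (hv : Injective v)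
    (h : ∀ a b, a < b → (u a < u b ↔ v a < v b)) (a b : ι) :
    u a < u b ↔ v a < v b := by
  rcases lt_trichotomy a b with hab | rfl | hba
  · exact h a b hab
  · simp
  · rw [← not_le, ← not_le, (hu.ne hba.ne).le_iff_lt, (hv.ne hba.ne).le_iff_lt, h b a hba]

theorem List.ofFn_sublist_ofFn_iff {α : Type*} {k n : ℕ} {u : Fin k → α} {v : Fin n → α} :
    (List.ofFn u).Sublist (List.ofFn v) ↔
      ∃ g : Fin k → Fin n, StrictMono g ∧ ∀ i, v (g i) = u i := by
  have hu : (List.ofFn u).length = k := List.length_ofFn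
  have hv : (List.ofFn v).length = n := List.length_ofFn
  rw [List.sublist_iff_exists_fin_orderEmbedding_get_eq]
  constructor
  · rintro ⟨f, hf⟩
    let e : Fin k ↪o Fin n := (Fin.castOrderIso hu.symm).toOrderEmbedding.trans
      (f.trans (Fin.castOrderIso hv).toOrderEmbedding)
    refine ⟨e, e.strictMono, fun i => ?_⟩
    simpa [e, Fin.cast] using (hf (Fin.cast hu.symm i)).symm
  · rintro ⟨g, hg, hgu⟩
    refine ⟨(Fin.castOrderIso hu).toOrderEmbedding.trans
      ((OrderEmbedding.ofStrictMono g hg).trans (Fin.castOrderIso hv.symm).toOrderEmbedding),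
      fun i => ?_⟩
    simp [hgu, Fin.cast]

theorem containsPat_iff_exists_forall_lt {k n : ℕ} {σ : Equiv.Perm (Fin k)}
    {π : Equiv.Perm (Fin n)} :
    ContainsPat σ π ↔
      ∃ f : Fin k → Fin n, StrictMono f ∧ ∀ a b, a < b → (σ a < σ b ↔ π (f a) < π (f b)) :=
  ⟨fun ⟨f, hf, hσπ⟩ => ⟨f, hf, fun a b _ => hσπ a b⟩, fun ⟨f, hf, hσπ⟩ =>
    ⟨f, hf, lt_iff_lt_of_forall_lt_imp σ.injective (π.injective.comp hf.injective) hσπ⟩⟩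

theorem ascWord_sublist_iff {k n : ℕ} (σ : Equiv.Perm (Fin (k + 1)))
    (π : Equiv.Perm (Fin (n + 1))) :
    (ascWord σ).Sublist (ascWord π) ↔ ∃ g : Fin k → Fin n, StrictMono g ∧
      ∀ i, (π (g i).castSucc < π (g i).succ ↔ σ i.castSucc < σ i.succ) := by
  simp only [ascWord, List.ofFn_sublist_ofFn_iff, decide_eq_decide]

namespace Av213231

variable {n : ℕ} {π : Equiv.Perm (Fin n)}

theorem lt_iff_lt_of_lt_of_lt (hπ : Av213231 π) {a b c : Fin n} (hab : a < b) (hbc : b < c) :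
    π a < π b ↔ π a < π c := by
  constructor
  · intro hb
    by_contra hc
    have hca : π c < π a := (not_lt.mp hc).lt_of_ne (π.injective.ne (hab.trans hbc).ne')
    exact hπ.2 ⟨a, b, c, hab, hbc, hca, hb⟩
  · intro hc
    by_contra hb
    have hba : π b < π a := (not_lt.mp hb).lt_of_ne (π.injective.ne hab.ne')
    exact hπ.1 ⟨a, b, c, hab, hbc, hba, hc⟩

theorem lt_iff_lt_s5 (hπ : Av213231 π) {a b c : Fin n} (hab : a < b) (hac : a < c) :
    π a < π b ↔ π a < π c := by
  rcases lt_trichotomy b c with hbc | rfl | hcb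
  · exact hπ.lt_iff_lt_of_lt_of_lt hab hbc
  · rfl
  · exact (hπ.lt_iff_lt_of_lt_of_lt hac hcb).symm

end Av213231

theorem ContainsPat.ascWord_sublist {k n : ℕ} {σ : Equiv.Perm (Fin (k + 1))}
    {π : Equiv.Perm (Fin (n + 1))} (hπ : Av213231 π) (h : ContainsPat σ π) :
    (ascWord σ).Sublist (ascWord π) := by
  obtain ⟨f, hf, hσπ⟩ := h
  let g : Fin k → Fin n := fun i =>
    (f i.castSucc).castPred (Fin.ne_last_of_lt (hf i.castSucc_lt_succ))
  have hg (i : Fin k) : (g i).castSucc = f i.castSucc := Fin.castSucc_castPred _ _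
  refine (ascWord_sublist_iff σ π).2 ⟨g, fun i j hij => ?_, fun i => ?_⟩
  · rw [← Fin.castSucc_lt_castSucc_iff, hg, hg]
    exact hf (Fin.castSucc_lt_castSucc_iff.2 hij)
  · rw [hσπ, ← hg]
    exact hπ.lt_iff_lt_s5 Fin.castSucc_lt_succ (by rw [hg]; exact hf Fin.castSucc_lt_succ)

theorem ContainsPat.of_ascWord_sublist {k n : ℕ} {σ : Equiv.Perm (Fin (k + 1))}
    {π : Equiv.Perm (Fin (n + 1))} (hσ : Av213231 σ) (hπ : Av213231 π)
    (h : (ascWord σ).Sublist (ascWord π)) : ContainsPat σ π := by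
  obtain ⟨g, hg, hgσ⟩ := (ascWord_sublist_iff σ π).1 h
  let f : Fin (k + 1) → Fin (n + 1) := Fin.snoc (fun i => (g i).castSucc) (Fin.last n)
  have hf_lt (i : Fin k) {b : Fin (k + 1)} (hb : i.castSucc < b) : (g i).castSucc < f b := by
    induction b using Fin.lastCases with
    | last => simpa only [f, Fin.snoc_last] using Fin.castSucc_lt_last (g i)
    | cast j => simpa [f] using hg (Fin.castSucc_lt_castSucc_iff.1 hb)
  refine containsPat_iff_exists_forall_lt.2 ⟨f, fun a b hab => ?_, fun a b hab => ?_⟩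
  all_goals
    obtain ⟨i, rfl⟩ := Fin.exists_castSucc_eq.2 (Fin.ne_last_of_lt hab)
  · simpa [f] using hf_lt i hab
  · have hfi : f i.castSucc = (g i).castSucc := by simp [f]
    rw [hσ.lt_iff_lt_s5 hab i.castSucc_lt_succ, ← hgσ, hfi,
      hπ.lt_iff_lt_s5 (g i).castSucc_lt_succ (hf_lt i hab)]

theorem contains_iff_ascWord_sublist_general (k n : ℕ)
    (σ : Equiv.Perm (Fin (k + 1))) (π : Equiv.Perm (Fin (n + 1)))
    (hσ : Av213231 σ) (hπ : Av213231 π) :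
    ContainsPat σ π ↔ (ascWord σ).Sublist (ascWord π) :=
  ⟨ContainsPat.ascWord_sublist hπ, ContainsPat.of_ascWord_sublist hσ hπ⟩

/-- For `σ`, `π` both (213,231)-avoiding, `π` contains `σ` iff the
ascent/descent word of `σ` is a subsequence of that of `π`. -/
theorem contains_iff_ascWord_sublist (k n : ℕ) (hkn : k ≤ n)
    (σ : Equiv.Perm (Fin (k + 1))) (π : Equiv.Perm (Fin (n + 1)))
    (hσ : Av213231 σ) (hπ : Av213231 π) :
    ContainsPat σ π ↔ (ascWord σ).Sublist (ascWord π) :=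
  contains_iff_ascWord_sublist_general k n σ π hσ hπ
end

section
/- Let σ and π be (213,231)-avoiding permutations and let t be a subsequence of π of the same length as σ such that the ascent/descent word of t equals the ascent/descent word of σ (where the i-th letter records whether the i-th element of the sequence is less than the (i+1)-th). Then t is order-isomorphic to σ, i.e., t is an occurrence of σ in π. -/
/-- In a (213,231)-avoiding permutation, whether `π i < π j` for `i < j`
depends only on `i`. -/
lemma av_key {n : ℕ} {π : Equiv.Perm (Fin n)} (h : Av213231 π)
    {i j j' : Fin n} (hij : i < j) (hij' : i < j') :
    (π i < π j ↔ π i < π j') := by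
  have aux : ∀ a b : Fin n, i < a → i < b → π i < π a → π i < π b := by
    intro a b hia hib hlt
    by_contra hnb
    have hne : π b ≠ π i := fun he => (ne_of_gt hib) (π.injective he)
    have hb : π b < π i := lt_of_le_of_ne (not_lt.mp hnb) hne
    rcases lt_trichotomy a b with hab | hab | hab
    · exact h.2 ⟨i, a, b, hia, hab, hb, hlt⟩
    · exact absurd hlt (hab ▸ hnb)
    · exact h.1 ⟨i, b, a, hib, hab, hb, hlt⟩
  exact ⟨aux j j' hij hij', aux j' j hij' hij⟩

/-- If `σ` and `π` are (213,231)-avoiding and `t = π ∘ f` is a subsequence of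
`π` of the same length as `σ` whose ascent/descent word equals that of `σ`,
then `t` is order-isomorphic to `σ` (an occurrence of `σ` in `π`). -/
theorem subsequence_same_word_is_occurrence (k n : ℕ)
    (σ : Equiv.Perm (Fin k)) (π : Equiv.Perm (Fin n))
    (hσ : Av213231 σ) (hπ : Av213231 π)
    (f : Fin k → Fin n) (hf : StrictMono f)
    (hword : ∀ i j : Fin k, i.val + 1 = j.val →
      (π (f i) < π (f j) ↔ σ i < σ j)) :
    ∀ a b : Fin k, π (f a) < π (f b) ↔ σ a < σ b := by
  have main : ∀ a b : Fin k, a < b → (π (f a) < π (f b) ↔ σ a < σ b) := by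
    intro a b hab
    have ha' : a.val + 1 < k := lt_of_le_of_lt (Nat.succ_le_of_lt hab) b.isLt
    set a' : Fin k := ⟨a.val + 1, ha'⟩ with ha'def
    have haa' : a < a' := by simp [ha'def, Fin.lt_def]
    calc π (f a) < π (f b) ↔ π (f a) < π (f a') := av_key hπ (hf hab) (hf haa')
      _ ↔ σ a < σ a' := hword a a' rfl
      _ ↔ σ a < σ b := av_key hσ haa' hab
  intro a b
  rcases lt_trichotomy a b with hab | hab | hab
  · exact main a b hab
  · subst hab; simp
  · have h1 := main b a hab
    constructor
    · intro hlt
      have : ¬ σ b < σ a := fun hc => absurd (h1.mpr hc) (asymm hlt)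
      have hne : σ a ≠ σ b := fun he => (ne_of_gt hab) (σ.injective he)
      exact lt_of_le_of_ne (not_lt.mp this) hne
    · intro hlt
      have : ¬ π (f b) < π (f a) := fun hc => absurd (h1.mp hc) (asymm hlt)
      have hne : π (f a) ≠ π (f b) := fun he =>
        (ne_of_gt hab) (hf.injective (π.injective he))
      exact lt_of_le_of_ne (not_lt.mp this) hne
end

section
/- Let π be a permutation of {1,...,n} avoiding 213 and 231, and suppose the indices 1, 2, ..., j are all ascents of π (i.e., π(i) < π(i+1) for all 1 ≤ i ≤ j) and j+1 ≤ n-1 is a descent (π(j+1) > π(j+2)) or j+1 = n. Then π(j+1) is the maximum element of π, i.e., π(j+1) = n. -/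
/-- If a (213,231)-avoiding permutation starts with an ascending run ending at
position `j` (every earlier position is an ascent), and `j` is a descent or the
last position, then `π j` is the maximum element. -/
theorem max_after_initial_ascending_run (n : ℕ) (π : Equiv.Perm (Fin (n + 1)))
    (hav : Av213231 π) (j : Fin (n + 1))
    (hasc : ∀ i : Fin (n + 1), (h : i < j) →
      π i < π ⟨i.val + 1, Nat.lt_of_le_of_lt h j.isLt⟩)
    (hdesc : j.val = n ∨ ∃ h : j.val + 1 < n + 1, π ⟨j.val + 1, h⟩ < π j) :
    π j = Fin.last n := by
  -- monotone along the initial ascending run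
  have key : ∀ (d : ℕ) (i : Fin (n + 1)), i.val + d = j.val → π i ≤ π j := by
    intro d
    induction d with
    | zero =>
      intro i h
      have : i = j := Fin.ext (by omega)
      simp [this]
    | succ d ih =>
      intro i h
      have hi : i < j := by
        have : i.val < j.val := by omega
        exact this
      have step := hasc i hi
      have h2 := ih ⟨i.val + 1, Nat.lt_of_le_of_lt hi j.isLt⟩ (by simp; omega)
      exact le_trans step.le h2
  have hall : ∀ k : Fin (n + 1), π k ≤ π j := by
    intro k
    rcases lt_trichotomy k j with hk | hk | hk
    · exact key (j.val - k.val) k (by have : k.val < j.val := hk; omega)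
    · simp [hk]
    · by_contra hc
      push_neg at hc
      rcases hdesc with hj | ⟨hlt, hd⟩
      · have : k.val < n + 1 := k.isLt
        have hjk : j.val < k.val := hk
        omega
      · set j1 : Fin (n + 1) := ⟨j.val + 1, hlt⟩ with hj1
        rcases eq_or_lt_of_le (show j1 ≤ k from by
            have : j.val < k.val := hk; show j.val + 1 ≤ k.val; omega) with he | hlt2
        · rw [← he] at hc
          exact absurd hd (not_lt.mpr hc.le)
        · exact hav.1 ⟨j, j1, k, by
            constructor
            · show j.val < j.val + 1; omega
            · exact ⟨hlt2, hd, hc⟩⟩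
  have hm := hall (π.symm (Fin.last n))
  rw [Equiv.apply_symm_apply] at hm
  exact le_antisymm (Fin.le_last _) hm
end

section
/- Let π be a permutation of {1,...,n} avoiding 213 and 231. Then the values of π at its descent positions, read from left to right, form a decreasing sequence, and the values of π at its ascent positions, read from left to right, form an increasing sequence. (Here position n is not classified.) -/
lemma key_lt {n : ℕ} (π : Equiv.Perm (Fin n)) (h : Av213231 π)
    (i k : Fin n) (hik : i < k) (hv : π i < π k) :
    ∀ m : Fin n, i < m → π i < π m := by
  intro m him
  by_contra hm
  push_neg at hm
  have hne : π m ≠ π i := fun e => (ne_of_gt him) (π.injective e)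
  have hm' : π m < π i := lt_of_le_of_ne hm hne
  rcases lt_trichotomy m k with hmk | hmk | hmk
  · exact h.1 ⟨i, m, k, him, hmk, hm', hv⟩
  · exact absurd (hmk ▸ hm') (not_lt.2 hv.le)
  · exact h.2 ⟨i, k, m, hik, hmk, hm', hv⟩

lemma key_gt {n : ℕ} (π : Equiv.Perm (Fin n)) (h : Av213231 π)
    (i k : Fin n) (hik : i < k) (hv : π k < π i) :
    ∀ m : Fin n, i < m → π m < π i := by
  intro m him
  by_contra hm
  push_neg at hm
  have hne : π i ≠ π m := fun e => (ne_of_gt him) (π.injective e.symm)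
  have hm' : π i < π m := lt_of_le_of_ne hm hne
  rcases lt_trichotomy k m with hkm | hkm | hkm
  · exact h.1 ⟨i, k, m, hik, hkm, hv, hm'⟩
  · exact absurd (hkm ▸ hv) (not_lt.2 hm'.le)
  · exact h.2 ⟨i, m, k, him, hkm, hv, hm'⟩

/-- In a (213,231)-avoiding permutation, the values at ascent positions are
increasing from left to right, and the values at descent positions are
decreasing from left to right. -/
theorem ascents_increasing_descents_decreasing (n : ℕ)
    (π : Equiv.Perm (Fin n)) (h : Av213231 π) :
    (∀ i j : Fin n, (hi : i.val + 1 < n) → (hj : j.val + 1 < n) → i < j →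
      π i < π ⟨i.val + 1, hi⟩ → π j < π ⟨j.val + 1, hj⟩ → π i < π j) ∧
    (∀ i j : Fin n, (hi : i.val + 1 < n) → (hj : j.val + 1 < n) → i < j →
      π ⟨i.val + 1, hi⟩ < π i → π ⟨j.val + 1, hj⟩ < π j → π j < π i) := by
  constructor
  · intro i j hi hj hij ha _
    exact key_lt π h i ⟨i.val + 1, hi⟩ (by simp [Fin.lt_def]) ha j hij
  · intro i j hi hj hij hd _
    exact key_gt π h i ⟨i.val + 1, hi⟩ (by simp [Fin.lt_def]) hd j hij
end

section
/- Every (213,231)-avoiding permutation of {1,...,n} is uniquely determined by its set of ascent positions; equivalently, two (213,231)-avoiding permutations of {1,...,n} with the same ascent set are equal. -/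
private lemma av_extremal {n : ℕ} {π : Equiv.Perm (Fin n)} (h : Av213231 π) (i : Fin n) :
    (∀ j, i < j → π i < π j) ∨ (∀ j, i < j → π j < π i) := by
  by_contra hc
  push_neg at hc
  obtain ⟨⟨j, hij, hji⟩, ⟨k, hik, hki⟩⟩ := hc
  have hji' : π j < π i := lt_of_le_of_ne hji (fun e => (ne_of_gt hij) (π.injective e))
  have hki' : π i < π k := lt_of_le_of_ne hki (fun e => (ne_of_gt hik) (π.injective e).symm)
  rcases lt_trichotomy j k with hjk | hjk | hjk
  · exact h.1 ⟨i, j, k, hij, hjk, hji', hki'⟩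
  · exact absurd (hjk ▸ hji') (not_lt.mpr hki'.le)
  · exact h.2 ⟨i, k, j, hik, hjk, hji', hki'⟩

private lemma av_asc_min {n : ℕ} {π : Equiv.Perm (Fin n)} (h : Av213231 π) {i : Fin n}
    (hi : i.val + 1 < n) (ha : π i < π ⟨i.val + 1, hi⟩) :
    ∀ j, i < j → π i < π j := by
  rcases av_extremal h i with h' | h'
  · exact h'
  · exact absurd ha (not_lt.mpr (h' ⟨i.val + 1, hi⟩ (by simp [Fin.lt_def])).le)

private lemma av_desc_max {n : ℕ} {π : Equiv.Perm (Fin n)} (h : Av213231 π) {i : Fin n}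
    (hi : i.val + 1 < n) (ha : ¬ π i < π ⟨i.val + 1, hi⟩) :
    ∀ j, i < j → π j < π i := by
  rcases av_extremal h i with h' | h'
  · exact absurd (h' ⟨i.val + 1, hi⟩ (by simp [Fin.lt_def])) ha
  · exact h'

/-- suffix value set -/
private def Tset {n : ℕ} (π : Equiv.Perm (Fin n)) (i : Fin n) : Finset (Fin n) :=
  (Finset.Ici i).image π

private lemma Tset_nonempty {n : ℕ} (π : Equiv.Perm (Fin n)) (i : Fin n) :
    (Tset π i).Nonempty :=
  ⟨π i, Finset.mem_image_of_mem π (Finset.mem_Ici.mpr le_rfl)⟩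

private lemma val_eq_of_Tset_eq {n : ℕ} {π₁ π₂ : Equiv.Perm (Fin n)}
    (h₁ : Av213231 π₁) (h₂ : Av213231 π₂) {i : Fin n}
    (hasc : ∀ (hi : i.val + 1 < n),
      (π₁ i < π₁ ⟨i.val + 1, hi⟩ ↔ π₂ i < π₂ ⟨i.val + 1, hi⟩))
    (hT : Tset π₁ i = Tset π₂ i) : π₁ i = π₂ i := by
  by_cases hi : i.val + 1 < n
  · by_cases ha : π₁ i < π₁ ⟨i.val + 1, hi⟩
    · have ha₂ : π₂ i < π₂ ⟨i.val + 1, hi⟩ := (hasc hi).mp ha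
      have key : ∀ (π : Equiv.Perm (Fin n)), Av213231 π → π i < π ⟨i.val + 1, hi⟩ →
          π i = (Tset π i).min' (Tset_nonempty π i) := by
        intro π h hA
        refine le_antisymm (Finset.le_min' _ _ _ ?_)
          (Finset.min'_le _ _ (Finset.mem_image_of_mem π (Finset.mem_Ici.mpr le_rfl)))
        intro y hy
        obtain ⟨j, hj, rfl⟩ := Finset.mem_image.mp hy
        rcases eq_or_lt_of_le (Finset.mem_Ici.mp hj) with rfl | hij
        · exact le_rfl
        · exact (av_asc_min h hi hA j hij).le
      rw [key π₁ h₁ ha, key π₂ h₂ ha₂]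
      simp [hT]
    · have ha₂ : ¬ π₂ i < π₂ ⟨i.val + 1, hi⟩ := fun c => ha ((hasc hi).mpr c)
      have key : ∀ (π : Equiv.Perm (Fin n)), Av213231 π → ¬ π i < π ⟨i.val + 1, hi⟩ →
          π i = (Tset π i).max' (Tset_nonempty π i) := by
        intro π h hA
        refine le_antisymm (Finset.le_max' _ _ (Finset.mem_image_of_mem π (Finset.mem_Ici.mpr le_rfl)))
          (Finset.max'_le _ _ _ ?_)
        intro y hy
        obtain ⟨j, hj, rfl⟩ := Finset.mem_image.mp hy
        rcases eq_or_lt_of_le (Finset.mem_Ici.mp hj) with rfl | hij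
        · exact le_rfl
        · exact (av_desc_max h hi hA j hij).le
      rw [key π₁ h₁ ha, key π₂ h₂ ha₂]
      simp [hT]
  · have hIci : Finset.Ici i = {i} := by
      ext j
      simp only [Finset.mem_Ici, Finset.mem_singleton]
      constructor
      · intro hj
        have : j.val ≤ i.val := by omega
        exact le_antisymm (by exact_mod_cast this) hj |>.symm ▸ rfl
      · rintro rfl; exact le_rfl
    have e1 : Tset π₁ i = {π₁ i} := by rw [Tset, hIci, Finset.image_singleton]
    have e2 : Tset π₂ i = {π₂ i} := by rw [Tset, hIci, Finset.image_singleton]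
    rw [e1, e2] at hT
    exact Finset.singleton_injective hT

private lemma Tset_succ {n : ℕ} (π : Equiv.Perm (Fin n)) {i : Fin n} (hi : i.val + 1 < n) :
    Tset π ⟨i.val + 1, hi⟩ = (Tset π i).erase (π i) := by
  have hIci : Finset.Ici (⟨i.val + 1, hi⟩ : Fin n) = (Finset.Ici i).erase i := by
    ext j
    simp only [Finset.mem_Ici, Finset.mem_erase, Fin.le_def, ne_eq, Fin.ext_iff]
    omega
  rw [Tset, hIci, Finset.image_erase π.injective]
  rfl

/-- Two (213,231)-avoiding permutations of `{1,…,n}` with the same ascent set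
are equal. -/
theorem av213231_eq_of_same_ascent_set (n : ℕ)
    (π₁ π₂ : Equiv.Perm (Fin n)) (h₁ : Av213231 π₁) (h₂ : Av213231 π₂)
    (hasc : ∀ (i : Fin n) (hi : i.val + 1 < n),
      (π₁ i < π₁ ⟨i.val + 1, hi⟩ ↔ π₂ i < π₂ ⟨i.val + 1, hi⟩)) :
    π₁ = π₂ := by
  have main : ∀ m : ℕ, ∀ i : Fin n, i.val = m → Tset π₁ i = Tset π₂ i := by
    intro m
    induction m with
    | zero =>
      intro i hi
      have hIci : Finset.Ici i = Finset.univ := by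
        ext j
        simp only [Finset.mem_Ici, Finset.mem_univ, iff_true, Fin.le_def]
        omega
      have himg : ∀ π : Equiv.Perm (Fin n), Finset.univ.image π = Finset.univ := by
        intro π
        ext b
        simp only [Finset.mem_image, Finset.mem_univ, iff_true]
        exact ⟨π.symm b, trivial, π.apply_symm_apply b⟩
      rw [Tset, Tset, hIci, himg, himg]
    | succ m ih =>
      intro i hi
      have hmn : m + 1 < n := hi ▸ i.isLt
      have hmn' : m < n := by omega
      set i₀ : Fin n := ⟨m, hmn'⟩ with hi₀
      have hT₀ : Tset π₁ i₀ = Tset π₂ i₀ := ih i₀ rfl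
      have hv : π₁ i₀ = π₂ i₀ :=
        val_eq_of_Tset_eq h₁ h₂ (fun h => hasc i₀ h) hT₀
      have hieq : i = ⟨i₀.val + 1, hmn⟩ := by
        apply Fin.ext; simp [hi₀, hi]
      rw [hieq, Tset_succ π₁ hmn, Tset_succ π₂ hmn, hT₀, hv]
  apply Equiv.ext
  intro i
  exact val_eq_of_Tset_eq h₁ h₂ (fun h => hasc i h) (main i.val i rfl)
end

section
/- Let π be a permutation of {1,...,n} avoiding 213 and 231, and suppose σ is a (213,231)-avoiding permutation of {1,...,k}. If the binary word Φ(σ) occurs as a subsequence of the binary word Φ(π), then σ is contained as a pattern in π; moreover the greedy leftmost embedding of Φ(σ) into Φ(π) yields an occurrence of σ in π. Here Φ(τ) is the word whose i-th letter is 1 if τ(i) < τ(i+1) and 0 otherwise, and if a subsequence of positions i₁ < ... < i_{k-1} of Φ(π) matches Φ(σ) letterwise, then the subsequence π(i₁), ..., π(i_{k-1}), π(n') for any n' > i_{k-1} with appropriate final letter is an occurrence of σ. -/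
/-! In a (213,231)-avoiding permutation every entry is either smaller or larger than all later
entries, so its comparison with any later entry is the ascent/descent letter at its position.
Hence sending the `a`-th entry of `σ` (for `a < k`) to the position of the matched letter in `π`,
and the last entry of `σ` to the last entry of `π`, preserves all comparisons. -/

theorem Av213231.lt_iff_lt_succ_of_castSucc_lt {n : ℕ} {π : Equiv.Perm (Fin (n + 1))}
    (hπ : Av213231 π) {i : Fin n} {j : Fin (n + 1)} (hij : i.castSucc < j) :
    π i.castSucc < π j ↔ π i.castSucc < π i.succ := by
  rcases (Fin.castSucc_lt_iff_succ_le.mp hij).eq_or_lt with rfl | hsj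
  · rfl
  have hi : i.castSucc < i.succ := Fin.castSucc_lt_succ
  constructor
  · intro hj
    by_contra! hs
    exact hπ.1 ⟨_, _, _, hi, hsj, hs.lt_of_ne (π.injective.ne hi.ne'), hj⟩
  · intro hs
    by_contra! hj
    exact hπ.2 ⟨_, _, _, hi, hsj, hj.lt_of_ne (π.injective.ne hij.ne'), hs⟩

theorem exists_strictMono_of_ascWord_sublist {k n : ℕ} {σ : Equiv.Perm (Fin (k + 1))}
    {π : Equiv.Perm (Fin (n + 1))} (hsub : (ascWord σ).Sublist (ascWord π)) :
    ∃ f : Fin k → Fin n, StrictMono f ∧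
      ∀ a, σ a.castSucc < σ a.succ ↔ π (f a).castSucc < π (f a).succ := by
  obtain ⟨f, hf⟩ := List.sublist_iff_exists_fin_orderEmbedding_get_eq.mp hsub
  have hσ : (ascWord σ).length = k := List.length_ofFn
  have hπ : (ascWord π).length = n := List.length_ofFn
  refine ⟨fun a => Fin.cast hπ (f (Fin.cast hσ.symm a)), fun a b hab => f.strictMono hab, ?_⟩
  intro a
  have hletter := hf (Fin.cast hσ.symm a)
  simp only [ascWord, List.get_ofFn] at hletter
  exact decide_eq_decide.mp hletter

theorem strictMono_lastCases_castSucc {k n : ℕ} {f : Fin k → Fin n} (hf : StrictMono f) :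
    StrictMono (Fin.lastCases (Fin.last n) (fun a => (f a).castSucc) :
      Fin (k + 1) → Fin (n + 1)) := by
  intro a b hab
  induction b using Fin.lastCases with
  | last =>
    induction a using Fin.lastCases with
    | last => exact absurd hab (lt_irrefl _)
    | cast a => simp
  | cast b =>
    induction a using Fin.lastCases with
    | last => exact absurd hab (not_lt.mpr (Fin.le_last _))
    | cast a => simpa using hf (Fin.castSucc_lt_castSucc_iff.mp hab)

theorem lt_iff_lt_of_injective_of_forall_lt {α β γ : Type*}
    [LinearOrder α] [LinearOrder β] [LinearOrder γ]
    {u : α → β} {v : α → γ} (hu : Function.Injective u) (hv : Function.Injective v)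
    (h : ∀ a b, a < b → (u a < u b ↔ v a < v b)) (a b : α) : u a < u b ↔ v a < v b := by
  rcases lt_trichotomy a b with hab | rfl | hba
  · exact h a b hab
  · simp
  · rw [← not_iff_not, not_lt, not_lt, (hu.ne hba.ne).le_iff_lt, (hv.ne hba.ne).le_iff_lt]
    exact h b a hba

/-- If `σ` and `π` are (213,231)-avoiding and the ascent/descent word of `σ`
is a subsequence of that of `π`, then `π` contains `σ` as a pattern. -/
theorem contains_of_ascWord_sublist (k n : ℕ)
    (σ : Equiv.Perm (Fin (k + 1))) (π : Equiv.Perm (Fin (n + 1)))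
    (hσ : Av213231 σ) (hπ : Av213231 π)
    (hsub : (ascWord σ).Sublist (ascWord π)) :
    ContainsPat σ π := by
  obtain ⟨f, hf, hasc⟩ := exists_strictMono_of_ascWord_sublist hsub
  set g : Fin (k + 1) → Fin (n + 1) := Fin.lastCases (Fin.last n) (fun a => (f a).castSucc)
  have hg : StrictMono g := strictMono_lastCases_castSucc hf
  refine ⟨g, hg,
    lt_iff_lt_of_injective_of_forall_lt σ.injective (π.injective.comp hg.injective) ?_⟩
  intro a b hab
  obtain ⟨a, rfl⟩ := Fin.exists_castSucc_eq.mpr (Fin.ne_last_of_lt hab)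
  have hga : g a.castSucc = (f a).castSucc := Fin.lastCases_castSucc _
  have hgab := hg hab
  rw [hga] at hgab ⊢
  rw [hσ.lt_iff_lt_succ_of_castSucc_lt hab, hπ.lt_iff_lt_succ_of_castSucc_lt hgab, hasc]
end

section
/- Let σ be a permutation of {1,...,k} avoiding 213 and 231. If σ(i) and σ(i') = σ(i)+1 are both ascent elements (σ(i) < σ(i+1) and σ(i') < σ(i'+1), with i, i' < k), then i < i' and every position l with i < l < i' is a descent position (σ(l) > σ(l+1)). -/
/-- In a (213,231)-avoiding permutation `σ`, if positions `i` and `i'` are both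
ascents and `σ i' = σ i + 1` (consecutive values), then `i < i'` and every
position strictly between `i` and `i'` is a descent. -/
theorem consecutive_ascents (k : ℕ) (σ : Equiv.Perm (Fin k))
    (hav : Av213231 σ) (i i' : Fin k)
    (hi : i.val + 1 < k) (hi' : i'.val + 1 < k)
    (hasc : σ i < σ ⟨i.val + 1, hi⟩) (hasc' : σ i' < σ ⟨i'.val + 1, hi'⟩)
    (hval : (σ i').val = (σ i).val + 1) :
    i < i' ∧ ∀ l : Fin k, i < l → (hl : l < i') →
      σ ⟨l.val + 1, Nat.lt_of_le_of_lt hl i'.isLt⟩ < σ l := by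
  -- key fact: an ascent position has all later values above it
  have key : ∀ (a : Fin k) (ha : a.val + 1 < k), σ a < σ ⟨a.val + 1, ha⟩ →
      ∀ m : Fin k, a < m → σ a < σ m := by
    intro a ha hasc m hm
    rcases lt_or_eq_of_le (Nat.succ_le_of_lt hm : a.val + 1 ≤ m.val) with h | h
    · by_contra hc
      push_neg at hc
      have hne : σ m ≠ σ a := fun e => absurd (σ.injective e)
        (by intro e'; exact absurd e' (ne_of_gt hm))
      exact hav.2 ⟨a, ⟨a.val + 1, ha⟩, m, by simp [Fin.lt_def],
        by simp [Fin.lt_def, h], lt_of_le_of_ne hc hne, hasc⟩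
    · have : (⟨a.val + 1, ha⟩ : Fin k) = m := Fin.ext h
      rwa [this] at hasc
  have hii' : i < i' := by
    rcases lt_trichotomy i i' with h | h | h
    · exact h
    · exfalso; rw [h] at hval; omega
    · exfalso
      have := key i' hi' hasc' i h
      omega
  refine ⟨hii', fun l hl hl' => ?_⟩
  by_contra hc
  push_neg at hc
  have hne : σ l ≠ σ ⟨l.val + 1, Nat.lt_of_le_of_lt hl' i'.isLt⟩ := by
    intro e
    have := σ.injective e
    simp [Fin.ext_iff] at this
  have hascl : σ l < σ ⟨l.val + 1, Nat.lt_of_le_of_lt hl' i'.isLt⟩ :=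
    lt_of_le_of_ne hc hne
  -- σ i < σ l since ascent at i and i < l
  have h1 : σ i < σ l := key i hi hasc l hl
  -- hence σ i' ≤ σ l, and l ≠ i' so σ i' < σ l
  have h2 : σ i' < σ l := by
    have : σ i' ≠ σ l := fun e => absurd (σ.injective e) (ne_of_gt hl')
    have : (σ i').val ≤ (σ l).val := by omega
    exact lt_of_le_of_ne (by exact this) ‹σ i' ≠ σ l›
  rcases lt_or_eq_of_le (Nat.succ_le_of_lt hl' : l.val + 1 ≤ i'.val) with h | h
  · exact hav.2 ⟨l, ⟨l.val + 1, Nat.lt_of_le_of_lt hl' i'.isLt⟩, i',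
      by simp [Fin.lt_def], by simp [Fin.lt_def, h], h2, hascl⟩
  · have : (⟨l.val + 1, Nat.lt_of_le_of_lt hl' i'.isLt⟩ : Fin k) = i' := Fin.ext h
    rw [this] at hascl
    exact absurd hascl (not_lt.mpr (le_of_lt h2))
end

section
/- Let s be a longest (213,231)-avoiding subsequence of a permutation π of {1,...,n} among those ending at a fixed index f. Then the ascent elements of s together with its last element form a longest increasing subsequence of π ending at index f, and the descent elements of s together with its last element form a longest decreasing subsequence of π ending at index f. -/
/-- A finite sequence avoids the patterns 213 and 231: no indices
`i < j < k` with `s j < s i < s k` (213) or `s k < s i < s j` (231). -/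
def AvSeq213231 {α : Type*} [LinearOrder α] {m : ℕ} (s : Fin m → α) : Prop :=
  (¬ ∃ i j k : Fin m, i < j ∧ j < k ∧ s j < s i ∧ s i < s k) ∧
  (¬ ∃ i j k : Fin m, i < j ∧ j < k ∧ s k < s i ∧ s i < s j)

lemma extract_aux {m : ℕ} (F : Finset (Fin (m+1))) (hlast : Fin.last m ∈ F) :
    ∃ (A₀ : ℕ) (e : Fin (A₀+1) → Fin (m+1)), F.card = A₀ + 1 ∧ StrictMono e ∧
      (∀ a, e a ∈ F) ∧ e (Fin.last A₀) = Fin.last m := by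
  have hpos : 0 < F.card := Finset.card_pos.mpr ⟨_, hlast⟩
  obtain ⟨A₀, hA⟩ : ∃ A₀, F.card = A₀ + 1 := ⟨F.card - 1, (Nat.succ_pred_eq_of_pos hpos).symm⟩
  refine ⟨A₀, fun a => (F.orderIsoOfFin hA a : Fin (m+1)), hA, ?_, fun a => (F.orderIsoOfFin hA a).2, ?_⟩
  · intro a b hab
    exact_mod_cast (F.orderIsoOfFin hA).strictMono hab
  · refine le_antisymm (Fin.le_last _) ?_
    have := (F.orderIsoOfFin hA).monotone (Fin.le_last ((F.orderIsoOfFin hA).symm ⟨Fin.last m, hlast⟩))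
    rw [OrderIso.apply_symm_apply] at this
    exact_mod_cast this

lemma merge_aux {n : ℕ} (π : Equiv.Perm (Fin n)) (f : Fin n) (m₁ m₂ : ℕ)
    (g₁ : Fin (m₁+1) → Fin n) (g₂ : Fin (m₂+1) → Fin n)
    (h₁ : StrictMono g₁) (h₂ : StrictMono g₂)
    (hl₁ : g₁ (Fin.last m₁) = f) (hl₂ : g₂ (Fin.last m₂) = f)
    (hinc : StrictMono fun a => π (g₁ a)) (hdec : StrictAnti fun a => π (g₂ a)) :
    ∃ g'' : Fin (m₁ + m₂ + 1) → Fin n, StrictMono g'' ∧ g'' (Fin.last (m₁+m₂)) = f ∧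
      AvSeq213231 (fun a => π (g'' a)) := by
  classical
  set T : Finset (Fin n) := Finset.univ.image g₁ ∪ Finset.univ.image g₂ with hTdef
  have hle : ∀ x ∈ T, x ≤ f := by
    intro x hx
    rcases Finset.mem_union.mp hx with hx | hx <;>
      obtain ⟨i, -, rfl⟩ := Finset.mem_image.mp hx
    · exact hl₁ ▸ h₁.monotone (Fin.le_last i)
    · exact hl₂ ▸ h₂.monotone (Fin.le_last i)
  have hfT : f ∈ T := Finset.mem_union_left _ (Finset.mem_image.mpr ⟨Fin.last m₁, Finset.mem_univ _, hl₁⟩)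
  have hv₁ : ∀ i : Fin (m₁+1), π (g₁ i) ≤ π f := fun i => hl₁ ▸ hinc.monotone (Fin.le_last i)
  have hv₂ : ∀ i : Fin (m₂+1), π f ≤ π (g₂ i) := fun i => hl₂ ▸ hdec.antitone (Fin.le_last i)
  have hint : Finset.univ.image g₁ ∩ Finset.univ.image g₂ = {f} := by
    ext x
    simp only [Finset.mem_inter, Finset.mem_image, Finset.mem_univ, true_and,
      Finset.mem_singleton]
    constructor
    · rintro ⟨⟨i, rfl⟩, ⟨j, hj⟩⟩
      have h1 : π (g₁ i) ≤ π f := hv₁ i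
      have h2 : π f ≤ π (g₁ i) := hj ▸ hv₂ j
      exact π.injective (le_antisymm h1 h2)
    · rintro rfl
      exact ⟨⟨Fin.last m₁, hl₁⟩, ⟨Fin.last m₂, hl₂⟩⟩
  have hT : T.card = m₁ + m₂ + 1 := by
    have := Finset.card_union_add_card_inter (Finset.univ.image g₁) (Finset.univ.image g₂)
    rw [hint, Finset.card_singleton, Finset.card_image_of_injective _ h₁.injective,
      Finset.card_image_of_injective _ h₂.injective] at this
    rw [← hTdef] at this
    simp only [Finset.card_univ, Fintype.card_fin] at this
    omega
  set e := T.orderIsoOfFin hT with he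
  refine ⟨fun a => (e a : Fin n), ?_, ?_, ?_, ?_⟩
  · intro a b hab
    exact_mod_cast e.strictMono hab
  · refine le_antisymm (hle _ (e _).2) ?_
    have := e.monotone (Fin.le_last (e.symm ⟨f, hfT⟩))
    rw [OrderIso.apply_symm_apply] at this
    exact_mod_cast this
  all_goals {
    have keyA : ∀ x y : Fin n, x ∈ Finset.univ.image g₁ → y ∈ T → x < y → π x < π y := by
      rintro x y hx hy hxy
      obtain ⟨i, -, rfl⟩ := Finset.mem_image.mp hx
      rcases Finset.mem_union.mp hy with hy | hy <;> obtain ⟨j, -, rfl⟩ := Finset.mem_image.mp hy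
      · exact hinc (h₁.lt_iff_lt.mp hxy)
      · have hxf : g₁ i < f := lt_of_lt_of_le hxy (hle _ (Finset.mem_union_right _ (Finset.mem_image.mpr ⟨j, Finset.mem_univ _, rfl⟩)))
        have : π (g₁ i) < π f := lt_of_le_of_ne (hv₁ i) (fun h => absurd (π.injective h) hxf.ne)
        exact lt_of_lt_of_le this (hv₂ j)
    have keyB : ∀ x y : Fin n, x ∈ Finset.univ.image g₂ → y ∈ T → x < y → π y < π x := by
      rintro x y hx hy hxy
      obtain ⟨i, -, rfl⟩ := Finset.mem_image.mp hx
      rcases Finset.mem_union.mp hy with hy | hy <;> obtain ⟨j, -, rfl⟩ := Finset.mem_image.mp hy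
      · have hxf : g₂ i < f := lt_of_lt_of_le hxy (hle _ (Finset.mem_union_left _ (Finset.mem_image.mpr ⟨j, Finset.mem_univ _, rfl⟩)))
        have : π f < π (g₂ i) := lt_of_le_of_ne (hv₂ i) (fun h => absurd (π.injective h.symm) hxf.ne)
        exact lt_of_le_of_lt (hv₁ j) this
      · exact hdec (h₂.lt_iff_lt.mp hxy)
    first
    | · rintro ⟨i, j, k, hij, hjk, hv1, hv2⟩
        rcases Finset.mem_union.mp (e i).2 with hi | hi
        · exact absurd (keyA _ _ hi (e j).2 (by exact_mod_cast e.strictMono hij)) (asymm hv1)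
        · exact absurd (keyB _ _ hi (e k).2 (by exact_mod_cast e.strictMono (hij.trans hjk))) (asymm hv2)
    | · rintro ⟨i, j, k, hij, hjk, hv1, hv2⟩
        rcases Finset.mem_union.mp (e i).2 with hi | hi
        · exact absurd (keyA _ _ hi (e k).2 (by exact_mod_cast e.strictMono (hij.trans hjk))) (asymm hv1)
        · exact absurd (keyB _ _ hi (e j).2 (by exact_mod_cast e.strictMono hij)) (asymm hv2)
  }

open Classical in
/-- Let `π ∘ g` be a longest (213,231)-avoiding subsequence of `π` ending at
index `f`.  Then the ascent elements of `π ∘ g` together with its last element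
are increasing and their number equals the length of a longest increasing
subsequence of `π` ending at `f`; dually, the descent elements together with
the last element are decreasing and their number equals the length of a
longest decreasing subsequence of `π` ending at `f`. -/
theorem ascents_of_longest_avoiding_subsequence (n m : ℕ)
    (π : Equiv.Perm (Fin n)) (f : Fin n)
    (g : Fin (m + 1) → Fin n) (hg : StrictMono g) (hlast : g (Fin.last m) = f)
    (havoid : AvSeq213231 (fun a => π (g a)))
    (hmax : ∀ (m' : ℕ) (g' : Fin (m' + 1) → Fin n), StrictMono g' →
      g' (Fin.last m') = f → AvSeq213231 (fun a => π (g' a)) → m' ≤ m) :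
    ((∀ j j' : Fin (m + 1), j < j' →
        (j = Fin.last m ∨ ∃ h : j.val < m, π (g j) < π (g ⟨j.val + 1, Nat.succ_lt_succ h⟩)) →
        (j' = Fin.last m ∨ ∃ h : j'.val < m, π (g j') < π (g ⟨j'.val + 1, Nat.succ_lt_succ h⟩)) →
        π (g j) < π (g j')) ∧
      (Finset.univ.filter (fun j : Fin (m + 1) =>
          j = Fin.last m ∨ ∃ h : j.val < m,
            π (g j) < π (g ⟨j.val + 1, Nat.succ_lt_succ h⟩))).card
        = sSup {L : ℕ | ∃ (m' : ℕ) (g' : Fin (m' + 1) → Fin n), StrictMono g' ∧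
            g' (Fin.last m') = f ∧ StrictMono (fun a => π (g' a)) ∧ L = m' + 1}) ∧
    ((∀ j j' : Fin (m + 1), j < j' →
        (j = Fin.last m ∨ ∃ h : j.val < m, π (g ⟨j.val + 1, Nat.succ_lt_succ h⟩) < π (g j)) →
        (j' = Fin.last m ∨ ∃ h : j'.val < m, π (g ⟨j'.val + 1, Nat.succ_lt_succ h⟩) < π (g j')) →
        π (g j') < π (g j)) ∧
      (Finset.univ.filter (fun j : Fin (m + 1) =>
          j = Fin.last m ∨ ∃ h : j.val < m,
            π (g ⟨j.val + 1, Nat.succ_lt_succ h⟩) < π (g j))).card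
        = sSup {L : ℕ | ∃ (m' : ℕ) (g' : Fin (m' + 1) → Fin n), StrictMono g' ∧
            g' (Fin.last m') = f ∧ StrictAnti (fun a => π (g' a)) ∧ L = m' + 1}) := by
  have hsinj : ∀ a b : Fin (m+1), π (g a) = π (g b) → a = b :=
    fun a b hab => hg.injective (π.injective hab)
  -- dichotomy: each element is below or above all later elements
  have hdich : ∀ i : Fin (m+1), (∀ k, i < k → π (g i) < π (g k)) ∨
      (∀ k, i < k → π (g k) < π (g i)) := by
    intro i
    by_contra hcon
    push_neg at hcon
    obtain ⟨⟨k, hik, hk⟩, ⟨k', hik', hk'⟩⟩ := hcon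
    have hklt : π (g k) < π (g i) := lt_of_le_of_ne hk (fun h => hik.ne' (hsinj _ _ h))
    have hk'lt : π (g i) < π (g k') := lt_of_le_of_ne hk' (fun h => hik'.ne (hsinj _ _ h))
    rcases lt_trichotomy k k' with h | h | h
    · exact havoid.1 ⟨i, k, k', hik, h, hklt, hk'lt⟩
    · subst h; exact absurd (hklt.trans hk'lt) (lt_irrefl _)
    · exact havoid.2 ⟨i, k', k, hik', h, hklt, hk'lt⟩
  have hasc : ∀ (j : Fin (m+1)) (h : j.val < m),
      π (g j) < π (g ⟨j.val + 1, Nat.succ_lt_succ h⟩) → ∀ k, j < k → π (g j) < π (g k) := by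
    intro j h hj k hk
    rcases hdich j with hd | hd
    · exact hd k hk
    · exact absurd hj (asymm (hd ⟨j.val+1, Nat.succ_lt_succ h⟩ (by simp [Fin.lt_def])))
  have hdesc : ∀ (j : Fin (m+1)) (h : j.val < m),
      π (g ⟨j.val + 1, Nat.succ_lt_succ h⟩) < π (g j) → ∀ k, j < k → π (g k) < π (g j) := by
    intro j h hj k hk
    rcases hdich j with hd | hd
    · exact absurd hj (asymm (hd ⟨j.val+1, Nat.succ_lt_succ h⟩ (by simp [Fin.lt_def])))
    · exact hd k hk
  have hmonoF : ∀ j j' : Fin (m+1), j < j' →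
      (j = Fin.last m ∨ ∃ h : j.val < m, π (g j) < π (g ⟨j.val + 1, Nat.succ_lt_succ h⟩)) →
      π (g j) < π (g j') := by
    intro j j' hjj' hj
    rcases hj with rfl | ⟨h, hj⟩
    · exact absurd (Fin.le_last j') (not_le.mpr hjj')
    · exact hasc j h hj j' hjj'
  have hmonoD : ∀ j j' : Fin (m+1), j < j' →
      (j = Fin.last m ∨ ∃ h : j.val < m, π (g ⟨j.val + 1, Nat.succ_lt_succ h⟩) < π (g j)) →
      π (g j') < π (g j) := by
    intro j j' hjj' hj
    rcases hj with rfl | ⟨h, hj⟩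
    · exact absurd (Fin.le_last j') (not_le.mpr hjj')
    · exact hdesc j h hj j' hjj'
  set F := (Finset.univ.filter (fun j : Fin (m + 1) =>
      j = Fin.last m ∨ ∃ h : j.val < m,
        π (g j) < π (g ⟨j.val + 1, Nat.succ_lt_succ h⟩))) with hFdef
  set D := (Finset.univ.filter (fun j : Fin (m + 1) =>
      j = Fin.last m ∨ ∃ h : j.val < m,
        π (g ⟨j.val + 1, Nat.succ_lt_succ h⟩) < π (g j))) with hDdef
  have hlastF : Fin.last m ∈ F := Finset.mem_filter.mpr ⟨Finset.mem_univ _, Or.inl rfl⟩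
  have hlastD : Fin.last m ∈ D := Finset.mem_filter.mpr ⟨Finset.mem_univ _, Or.inl rfl⟩
  have hunion : F ∪ D = Finset.univ := by
    ext j
    simp only [hFdef, hDdef, Finset.mem_union, Finset.mem_filter, Finset.mem_univ, true_and,
      iff_true]
    by_cases hj : j = Fin.last m
    · exact Or.inl (Or.inl hj)
    · have hjm : j.val < m := by
        have h1 := j.isLt
        have h2 : j.val ≠ m := fun h => hj (Fin.ext h)
        omega
      have hne : π (g j) ≠ π (g ⟨j.val + 1, Nat.succ_lt_succ hjm⟩) := by
        intro h
        have := hsinj _ _ h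
        rw [Fin.ext_iff] at this
        simp at this
      rcases lt_or_gt_of_ne hne with h | h
      · exact Or.inl (Or.inr ⟨hjm, h⟩)
      · exact Or.inr (Or.inr ⟨hjm, h⟩)
  have hinter : F ∩ D = {Fin.last m} := by
    ext j
    simp only [hFdef, hDdef, Finset.mem_inter, Finset.mem_filter, Finset.mem_univ, true_and,
      Finset.mem_singleton]
    constructor
    · rintro ⟨hjF, hjD⟩
      rcases hjF with h | ⟨h1, h2⟩
      · exact h
      · rcases hjD with h | ⟨h3, h4⟩
        · exact h
        · exact absurd (h2.trans h4) (lt_irrefl _)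
    · rintro rfl
      exact ⟨Or.inl rfl, Or.inl rfl⟩
  have hcardFD : F.card + D.card = m + 2 := by
    have := Finset.card_union_add_card_inter F D
    rw [hunion, hinter] at this
    simp only [Finset.card_univ, Fintype.card_fin, Finset.card_singleton] at this
    omega
  -- extract increasing subsequence from F
  obtain ⟨A₀, eF, hcardF, heFmono, heFmem, heFlast⟩ := extract_aux F hlastF
  obtain ⟨B₀, eD, hcardD, heDmono, heDmem, heDlast⟩ := extract_aux D hlastD
  have hg₁ : StrictMono (fun a => g (eF a)) := hg.comp heFmono
  have hg₁last : g (eF (Fin.last A₀)) = f := by rw [heFlast, hlast]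
  have hg₁inc : StrictMono (fun a : Fin (A₀+1) => π (g (eF a))) := by
    intro a b hab
    exact hmonoF _ _ (heFmono hab) (Finset.mem_filter.mp (heFmem a)).2
  have hg₂ : StrictMono (fun a => g (eD a)) := hg.comp heDmono
  have hg₂last : g (eD (Fin.last B₀)) = f := by rw [heDlast, hlast]
  have hg₂dec : StrictAnti (fun a : Fin (B₀+1) => π (g (eD a))) := by
    intro a b hab
    exact hmonoD _ _ (heDmono hab) (Finset.mem_filter.mp (heDmem a)).2
  have hbdd₁ : BddAbove {L : ℕ | ∃ (m' : ℕ) (g' : Fin (m' + 1) → Fin n), StrictMono g' ∧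
      g' (Fin.last m') = f ∧ StrictMono (fun a => π (g' a)) ∧ L = m' + 1} := by
    refine ⟨n, fun L hL => ?_⟩
    obtain ⟨m', g', hg', -, -, rfl⟩ := hL
    have := Fintype.card_le_of_injective g' hg'.injective
    simpa using this
  have hbdd₂ : BddAbove {L : ℕ | ∃ (m' : ℕ) (g' : Fin (m' + 1) → Fin n), StrictMono g' ∧
      g' (Fin.last m') = f ∧ StrictAnti (fun a => π (g' a)) ∧ L = m' + 1} := by
    refine ⟨n, fun L hL => ?_⟩
    obtain ⟨m', g', hg', -, -, rfl⟩ := hL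
    have := Fintype.card_le_of_injective g' hg'.injective
    simpa using this
  have hmemF : F.card ∈ {L : ℕ | ∃ (m' : ℕ) (g' : Fin (m' + 1) → Fin n), StrictMono g' ∧
      g' (Fin.last m') = f ∧ StrictMono (fun a => π (g' a)) ∧ L = m' + 1} :=
    ⟨A₀, fun a => g (eF a), hg₁, hg₁last, hg₁inc, hcardF⟩
  have hmemD : D.card ∈ {L : ℕ | ∃ (m' : ℕ) (g' : Fin (m' + 1) → Fin n), StrictMono g' ∧
      g' (Fin.last m') = f ∧ StrictAnti (fun a => π (g' a)) ∧ L = m' + 1} :=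
    ⟨B₀, fun a => g (eD a), hg₂, hg₂last, hg₂dec, hcardD⟩
  refine ⟨⟨fun j j' hjj' hj _ => hmonoF j j' hjj' hj, ?_⟩,
    ⟨fun j j' hjj' hj _ => hmonoD j j' hjj' hj, ?_⟩⟩
  · refine le_antisymm (le_csSup hbdd₁ hmemF) (csSup_le ⟨F.card, hmemF⟩ ?_)
    rintro L ⟨m₁, gI, hgI, hgIlast, hgIinc, rfl⟩
    obtain ⟨g'', hg''mono, hg''last, hg''avoid⟩ :=
      merge_aux π f m₁ B₀ gI (fun a => g (eD a)) hgI hg₂ hgIlast hg₂last hgIinc hg₂dec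
    have := hmax (m₁ + B₀) g'' hg''mono hg''last hg''avoid
    omega
  · refine le_antisymm (le_csSup hbdd₂ hmemD) (csSup_le ⟨D.card, hmemD⟩ ?_)
    rintro L ⟨m₂, gD, hgD, hgDlast, hgDdec, rfl⟩
    obtain ⟨g'', hg''mono, hg''last, hg''avoid⟩ :=
      merge_aux π f A₀ m₂ (fun a => g (eF a)) gD hg₁ hgD hg₁last hgDlast hg₁inc hgDdec
    have := hmax (A₀ + m₂) g'' hg''mono hg''last hg''avoid
    omega
end

section
/- For any permutation π of {1,...,n} and any index f, the maximum length of a (213,231)-avoiding subsequence of π ending at index f equals LIS(f) + LDS(f) − 1, where LIS(f) (resp. LDS(f)) is the maximum length of an increasing (resp. decreasing) subsequence of π ending at index f. -/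
open Set Function OrderDual

section Patterns

variable {ι κ α : Type*} [LinearOrder ι] [LinearOrder κ] [LinearOrder α]
  {s : ι → α} {S I D : Set ι} {z : ι}

def Avoids213On (s : ι → α) (S : Set ι) : Prop :=
  ∀ ⦃x⦄, x ∈ S → ∀ ⦃y⦄, y ∈ S → ∀ ⦃w⦄, w ∈ S → x < y → y < w → ¬ (s y < s x ∧ s x < s w)

/-- An occurrence of 231 in `s` is an occurrence of 213 in `toDual ∘ s`. -/
def Avoids213231On (s : ι → α) (S : Set ι) : Prop :=
  Avoids213On s S ∧ Avoids213On (toDual ∘ s) S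

theorem Avoids213On.strictMonoOn_sep_le (h : Avoids213On s S) (hs : InjOn s S)
    (hz : IsGreatest S z) : StrictMonoOn s {x ∈ S | s x ≤ s z} := by
  rintro x ⟨hxS, hxz⟩ y ⟨hyS, hyz⟩ hxy
  have hx_lt : s x < s z :=
    hxz.lt_of_ne fun he => (hxy.trans_le (hz.2 hyS)).ne (hs hxS hz.1 he)
  rcases (hz.2 hyS).eq_or_lt with rfl | hy_lt
  · exact hx_lt
  · exact (le_of_not_gt fun hyx => h hxS hyS hz.1 hxy hy_lt ⟨hyx, hx_lt⟩).lt_of_ne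
      fun he => hxy.ne (hs hxS hyS he)

theorem avoids213On_union (hI : StrictMonoOn s I) (hD : StrictAntiOn s D)
    (hzI : IsGreatest I z) (hzD : IsGreatest D z) : Avoids213On s (I ∪ D) := by
  have hle : ∀ v ∈ I ∪ D, v ≤ z := fun v hv => hv.elim (hzI.2 ·) (hzD.2 ·)
  rintro x hx y hy w hw hxy hyw ⟨hyx, hxw⟩
  have hxz : x < z := hxy.trans (hyw.trans_le (hle w hw))
  rcases hx with hxI | hxD
  · have hsx : s x < s z := hI hxI hzI.1 hxz
    rcases hy with hyI | hyD
    · exact (hI hxI hyI hxy).not_gt hyx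
    · exact (hsx.trans_le (hD.antitoneOn hyD hzD.1 (hle y (.inr hyD)))).not_gt hyx
  · have hsx : s z < s x := hD hxD hzD.1 hxz
    rcases hw with hwI | hwD
    · exact ((hI.monotoneOn hwI hzI.1 (hle w (.inl hwI))).trans_lt hsx).not_gt hxw
    · exact (hD hxD hwD (hxy.trans hyw)).not_gt hxw

theorem inter_eq_singleton_of_strictMonoOn_of_strictAntiOn (hI : StrictMonoOn s I)
    (hD : StrictAntiOn s D) (hzI : IsGreatest I z) (hzD : IsGreatest D z) : I ∩ D = {z} := by
  refine Subset.antisymm (fun x ⟨hxI, hxD⟩ => ?_) (singleton_subset_iff.2 ⟨hzI.1, hzD.1⟩)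
  by_contra hxz
  have hlt : x < z := (hzI.2 hxI).lt_of_ne hxz
  exact (hI hxI hzI.1 hlt).not_gt (hD hxD hzD.1 hlt)

theorem StrictMono.strictMono_comp_iff_strictMonoOn_range {g : κ → ι} (hg : StrictMono g) :
    StrictMono (fun a => s (g a)) ↔ StrictMonoOn s (range g) := by
  simp only [StrictMonoOn, forall_mem_range, hg.lt_iff_lt]
  rfl

theorem StrictMono.strictAnti_comp_iff_strictAntiOn_range {g : κ → ι} (hg : StrictMono g) :
    StrictAnti (fun a => s (g a)) ↔ StrictAntiOn s (range g) :=
  hg.strictMono_comp_iff_strictMonoOn_range (s := toDual ∘ s)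

theorem StrictMono.avoids213On_range_iff {g : κ → ι} (hg : StrictMono g) :
    Avoids213On s (range g) ↔
      ¬ ∃ i j k, i < j ∧ j < k ∧ s (g j) < s (g i) ∧ s (g i) < s (g k) := by
  simp only [Avoids213On, forall_mem_range, hg.lt_iff_lt, not_exists, not_and]

theorem StrictMono.avSeq213231_comp_iff {m : ℕ} {g : Fin m → ι} (hg : StrictMono g) :
    AvSeq213231 (fun a => s (g a)) ↔ Avoids213231On s (range g) := by
  rw [Avoids213231On, hg.avoids213On_range_iff, hg.avoids213On_range_iff]
  refine and_congr Iff.rfl (not_congr <| exists₃_congr fun i j k => ?_)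
  simp only [comp_apply, toDual_lt_toDual, and_comm (a := s (g k) < s (g i))]

end Patterns

section Lengths

variable {ι α : Type*} [LinearOrder ι] [LinearOrder α] {s : ι → α} {f : ι}

/-- A subsequence is recorded by its set of indices. -/
def lengthsEndingAt (P : Set ι → Prop) (f : ι) : Set ℕ :=
  {L | ∃ S : Finset ι, IsGreatest (S : Set ι) f ∧ P S ∧ S.card = L}

theorem one_mem_lengthsEndingAt {P : Set ι → Prop} (h : P {f}) : 1 ∈ lengthsEndingAt P f :=
  ⟨{f}, by simp, by simpa using h, Finset.card_singleton f⟩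

theorem bddAbove_lengthsEndingAt [Fintype ι] (P : Set ι → Prop) (f : ι) :
    BddAbove (lengthsEndingAt P f) :=
  ⟨Fintype.card ι, by rintro _ ⟨S, -, -, rfl⟩; exact S.card_le_univ⟩

theorem setOf_strictMono_fin_eq_lengthsEndingAt {Q : ∀ m : ℕ, (Fin (m + 1) → ι) → Prop}
    {P : Set ι → Prop} (hQP : ∀ m (g : Fin (m + 1) → ι), StrictMono g → (Q m g ↔ P (range g)))
    (f : ι) :
    {L : ℕ | ∃ (m : ℕ) (g : Fin (m + 1) → ι), StrictMono g ∧ g (Fin.last m) = f ∧ Q m g ∧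
      L = m + 1} = lengthsEndingAt P f := by
  classical
  have isGreatest_last {m : ℕ} {g : Fin (m + 1) → ι} (hg : Monotone g) :
      IsGreatest (range g) (g (Fin.last m)) :=
    ⟨mem_range_self _, forall_mem_range.2 fun a => hg (Fin.le_last a)⟩
  ext L
  constructor
  · rintro ⟨m, g, hg, rfl, hQ, rfl⟩
    have hrange : ((Finset.univ.image g : Finset ι) : Set ι) = range g := by simp
    refine ⟨Finset.univ.image g, hrange ▸ isGreatest_last hg.monotone,
      hrange ▸ (hQP m g hg).1 hQ, ?_⟩
    simp [Finset.card_image_of_injective _ hg.injective]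
  · rintro ⟨S, hf, hP, rfl⟩
    obtain ⟨m, hm⟩ : ∃ m, S.card = m + 1 :=
      Nat.exists_eq_succ_of_ne_zero (Finset.card_ne_zero_of_mem hf.1)
    have hrange : range (S.orderEmbOfFin hm) = S := S.range_orderEmbOfFin hm
    have hg := (S.orderEmbOfFin hm).strictMono
    exact ⟨m, _, hg, (isGreatest_last hg.monotone).unique (hrange ▸ hf),
      (hQP m _ hg).2 (hrange ▸ hP), hm⟩

theorem Avoids213231On.exists_card_add_one_eq {S : Finset ι} (h : Avoids213231On s S)
    (hs : InjOn s S) (hf : IsGreatest (S : Set ι) f) :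
    ∃ a ∈ lengthsEndingAt (StrictMonoOn s) f, ∃ b ∈ lengthsEndingAt (StrictAntiOn s) f,
      S.card + 1 = a + b := by
  classical
  have isGreatest_filter (p : ι → Prop) [DecidablePred p] (hp : p f) :
      IsGreatest ((S.filter p : Finset ι) : Set ι) f :=
    ⟨by simpa using ⟨hf.1, hp⟩, fun x hx => hf.2 (Finset.filter_subset _ _ hx)⟩
  have hinter : S.filter (s · ≤ s f) ∩ S.filter (s f ≤ s ·) = {f} := by
    ext x
    simp only [← Finset.filter_and, Finset.mem_filter, Finset.mem_singleton, ← le_antisymm_iff]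
    exact ⟨fun ⟨hx, he⟩ => hs hx hf.1 he, by rintro rfl; exact ⟨hf.1, rfl⟩⟩
  refine ⟨_, ⟨S.filter (s · ≤ s f), isGreatest_filter _ le_rfl, ?_, rfl⟩,
    _, ⟨S.filter (s f ≤ s ·), isGreatest_filter _ le_rfl, ?_, rfl⟩, ?_⟩
  · rw [Finset.coe_filter]
    exact h.1.strictMonoOn_sep_le hs hf
  · rw [Finset.coe_filter]
    exact h.2.strictMonoOn_sep_le hs hf
  · rw [← Finset.card_union_add_card_inter, ← Finset.filter_or, hinter,
      Finset.filter_true_of_mem fun x _ => le_total _ _, Finset.card_singleton]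

theorem exists_mem_lengthsEndingAt_avoids213231On_add_one_eq {a b : ℕ}
    (ha : a ∈ lengthsEndingAt (StrictMonoOn s) f) (hb : b ∈ lengthsEndingAt (StrictAntiOn s) f) :
    ∃ c ∈ lengthsEndingAt (Avoids213231On s) f, c + 1 = a + b := by
  classical
  obtain ⟨I, hfI, hI, rfl⟩ := ha
  obtain ⟨D, hfD, hD, rfl⟩ := hb
  have hinter : I ∩ D = {f} := Finset.coe_injective <| by
    push_cast
    exact inter_eq_singleton_of_strictMonoOn_of_strictAntiOn hI hD hfI hfD
  refine ⟨_, ⟨I ∪ D, ?_, ?_, rfl⟩, ?_⟩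
  · simpa using hfI.union hfD
  · rw [Finset.coe_union]
    refine ⟨avoids213On_union hI hD hfI hfD, ?_⟩
    rw [union_comm]
    exact avoids213On_union hD hI.dual_right hfD hfI
  · rw [← Finset.card_union_add_card_inter, hinter, Finset.card_singleton]

end Lengths

theorem Nat.sSup_add_one_eq_sSup_add_sSup {A I D : Set ℕ} (hA : BddAbove A) (hI : BddAbove I)
    (hD : BddAbove D) (hI₀ : I.Nonempty) (hD₀ : D.Nonempty)
    (split : ∀ c ∈ A, ∃ a ∈ I, ∃ b ∈ D, c + 1 = a + b)
    (merge : ∀ a ∈ I, ∀ b ∈ D, ∃ c ∈ A, c + 1 = a + b) :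
    sSup A + 1 = sSup I + sSup D := by
  obtain ⟨c, hc, hcab⟩ := merge _ (Nat.sSup_mem hI₀ hI) _ (Nat.sSup_mem hD₀ hD)
  obtain ⟨a, ha, b, hb, habc⟩ := split _ (Nat.sSup_mem ⟨c, hc⟩ hA)
  have := le_csSup hA hc
  have := le_csSup hI ha
  have := le_csSup hD hb
  omega

theorem sSup_lengthsEndingAt_avoids213231On_add_one {ι α : Type*} [LinearOrder ι] [Fintype ι]
    [LinearOrder α] {s : ι → α} (hs : Injective s) (f : ι) :
    sSup (lengthsEndingAt (Avoids213231On s) f) + 1 =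
      sSup (lengthsEndingAt (StrictMonoOn s) f) + sSup (lengthsEndingAt (StrictAntiOn s) f) :=
  Nat.sSup_add_one_eq_sSup_add_sSup (bddAbove_lengthsEndingAt _ f) (bddAbove_lengthsEndingAt _ f)
    (bddAbove_lengthsEndingAt _ f) ⟨1, one_mem_lengthsEndingAt (strictMonoOn_singleton s)⟩
    ⟨1, one_mem_lengthsEndingAt (strictAntiOn_singleton s)⟩
    (fun _ ⟨_, hf, h, hc⟩ => hc ▸ h.exists_card_add_one_eq hs.injOn hf)
    (fun _ ha _ hb => exists_mem_lengthsEndingAt_avoids213231On_add_one_eq ha hb)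

/-- The maximum length of a (213,231)-avoiding subsequence of `π` ending at
index `f` equals `LIS(f) + LDS(f) - 1`, where `LIS(f)` (resp. `LDS(f)`) is the
maximum length of an increasing (resp. decreasing) subsequence ending at `f`. -/
theorem longest_avoiding_eq_LIS_add_LDS_sub_one (n : ℕ)
    (π : Equiv.Perm (Fin n)) (f : Fin n) :
    sSup {L : ℕ | ∃ (m : ℕ) (g : Fin (m + 1) → Fin n), StrictMono g ∧
        g (Fin.last m) = f ∧ AvSeq213231 (fun a => π (g a)) ∧ L = m + 1}
      = sSup {L : ℕ | ∃ (m : ℕ) (g : Fin (m + 1) → Fin n), StrictMono g ∧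
          g (Fin.last m) = f ∧ StrictMono (fun a => π (g a)) ∧ L = m + 1}
        + sSup {L : ℕ | ∃ (m : ℕ) (g : Fin (m + 1) → Fin n), StrictMono g ∧
            g (Fin.last m) = f ∧ StrictAnti (fun a => π (g a)) ∧ L = m + 1}
        - 1 := by
  rw [setOf_strictMono_fin_eq_lengthsEndingAt (fun _ _ hg => hg.avSeq213231_comp_iff),
    setOf_strictMono_fin_eq_lengthsEndingAt
      (fun _ _ hg => hg.strictMono_comp_iff_strictMonoOn_range),
    setOf_strictMono_fin_eq_lengthsEndingAt
      (fun _ _ hg => hg.strictAnti_comp_iff_strictAntiOn_range),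
    ← sSup_lengthsEndingAt_avoids213231On_add_one π.injective f, Nat.add_sub_cancel]
end

section
/- A finite sequence s = (s₁, ..., s_m) of distinct integers is (213,231)-avoiding if and only if the union of the set of indices j < m with s_j < s_{j+1} (taken with the final index m) gives an increasing subsequence of values, the set of indices j < m with s_j > s_{j+1} (with the final index m) gives a decreasing subsequence of values, and hence s is the interleaving of one increasing and one decreasing sequence where each non-final element is either the suffix minimum or the suffix maximum. -/
/-- A finite sequence of distinct integers avoids 213 and 231 iff every
non-final element is the minimum or the maximum of its suffix. -/
theorem avSeq_iff_suffix_min_or_max (m : ℕ) (s : Fin m → ℤ)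
    (hs : Function.Injective s) :
    AvSeq213231 s ↔ ∀ i : Fin m, i.val + 1 < m →
      ((∀ j : Fin m, i ≤ j → s i ≤ s j) ∨ (∀ j : Fin m, i ≤ j → s j ≤ s i)) := by
  constructor
  · rintro ⟨h213, h231⟩ i _
    by_contra hcon
    push_neg at hcon
    obtain ⟨⟨p, hip, hp⟩, ⟨q, hiq, hq⟩⟩ := hcon
    have hip' : i < p := lt_of_le_of_ne hip (by rintro rfl; exact absurd rfl (ne_of_gt hp))
    have hiq' : i < q := lt_of_le_of_ne hiq (by rintro rfl; exact absurd rfl (ne_of_lt hq))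
    rcases lt_trichotomy p q with hpq | rfl | hqp
    · exact h213 ⟨i, p, q, hip', hpq, hp, hq⟩
    · exact absurd rfl (ne_of_gt (lt_trans hq hp))
    · exact h231 ⟨i, q, p, hiq', hqp, hp, hq⟩
  · intro h
    constructor
    · rintro ⟨i, j, k, hij, hjk, h1, h2⟩
      have : i.val + 1 < m := lt_of_le_of_lt (Nat.succ_le_of_lt hij) j.isLt
      rcases h i this with hmin | hmax
      · exact absurd (hmin j (le_of_lt hij)) (not_le.mpr h1)
      · exact absurd (hmax k (le_of_lt (lt_trans hij hjk))) (not_le.mpr h2)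
    · rintro ⟨i, j, k, hij, hjk, h1, h2⟩
      have : i.val + 1 < m := lt_of_le_of_lt (Nat.succ_le_of_lt hij) j.isLt
      rcases h i this with hmin | hmax
      · exact absurd (hmin k (le_of_lt (lt_trans hij hjk))) (not_le.mpr h1)
      · exact absurd (hmax j (le_of_lt hij)) (not_le.mpr h2)
end

section
/- Let π be a permutation of {1,...,n} avoiding 213 and 231, and decompose π into maximal factors of consecutive ascent/descent elements. If a factor F is an ascent factor (all its positions are ascents) and F is not the last factor, then the maximum value among all elements from the start of F to the end of π is attained at the leftmost element of the factor immediately following F. -/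
/-- In a (213,231)-avoiding permutation, if positions `i, …, j-1` are all
ascents (an ascent factor) and position `j` is a descent or the last position,
then the maximum of the whole suffix starting at `i` is attained at `π j`
(the leftmost element of the next factor). -/
theorem max_of_suffix_after_ascent_factor (n : ℕ)
    (π : Equiv.Perm (Fin (n + 1))) (hav : Av213231 π) (i j : Fin (n + 1))
    (hij : i < j)
    (hasc : ∀ l : Fin (n + 1), i ≤ l → (hl : l < j) →
      π l < π ⟨l.val + 1, Nat.lt_of_le_of_lt hl j.isLt⟩)
    (hdesc : j.val = n ∨ ∃ h : j.val + 1 < n + 1, π ⟨j.val + 1, h⟩ < π j) :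
    ∀ l : Fin (n + 1), i ≤ l → π l ≤ π j := by
  have chain : ∀ d : ℕ, ∀ l : Fin (n + 1), i ≤ l → l.val + d = j.val → π l ≤ π j := by
    intro d
    induction d with
    | zero =>
      intro l hl heq
      have : l = j := Fin.ext (by simpa using heq)
      simp [this]
    | succ d ih =>
      intro l hl heq
      have hlj : l < j := by
        have : l.val < j.val := by omega
        exact this
      have hstep := hasc l hl hlj
      have hnext : i ≤ (⟨l.val + 1, Nat.lt_of_le_of_lt hlj j.isLt⟩ : Fin (n + 1)) := by
        apply le_of_lt
        have : i.val < l.val + 1 := by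
          have := Fin.le_iff_val_le_val.mp hl; omega
        exact this
      exact le_of_lt (lt_of_lt_of_le hstep (ih _ hnext (by simp; omega)))
  intro l hl
  rcases lt_trichotomy l j with hlt | heq | hgt
  · exact chain (j.val - l.val) l hl (by have := Fin.lt_iff_val_lt_val.mp hlt; omega)
  · simp [heq]
  · -- l > j
    have hne : j.val ≠ n := by
      intro h
      have := l.isLt
      have := Fin.lt_iff_val_lt_val.mp hgt
      omega
    rcases hdesc with h | ⟨h, hd⟩
    · exact absurd h hne
    · by_cases hl1 : l = ⟨j.val + 1, h⟩
      · rw [hl1]; exact le_of_lt hd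
      · have hgt1 : (⟨j.val + 1, h⟩ : Fin (n + 1)) < l := by
          have : j.val < l.val := Fin.lt_iff_val_lt_val.mp hgt
          have : j.val + 1 ≤ l.val := this
          rcases lt_or_eq_of_le this with h' | h'
          · exact h'
          · exact absurd (Fin.ext h'.symm) hl1
        by_contra hcon
        push_neg at hcon
        have hne2 : π j ≠ π l := fun he => (ne_of_gt hgt) (π.injective he.symm)
        have hlt2 : π j < π l := lt_of_le_of_ne (le_of_lt hcon) hne2
        exact hav.1 ⟨j, ⟨j.val + 1, h⟩, l, by simp [Fin.lt_iff_val_lt_val],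
          hgt1, hd, hlt2⟩
end
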